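/- arXiv:0812.1276 — 10 statements merged into one kernel-verified Lean document; each statement's English description precedes it below -/
import Mathlib

section
/- A bipartite graph on more than three vertices is prime if and only if it is connected and any two distinct vertices have distinct neighborhoods. -/
set_option autoImplicit false

/-- A set of vertices is autonomous if every vertex outside it is adjacent
either to all of its elements or to none of them. -/
def Autonomous {V : Type*} (G : SimpleGraph V) (A : Set V) : Prop :=
  ∀ v ∉ A, (∀ a ∈ A, G.Adj v a) ∨ (∀ a ∈ A, ¬ G.Adj v a)

/-- A graph is prime if it has more than three vertices and its only
autonomous sets are the trivial ones. -/
def PrimeGraph {V : Type*} (G : SimpleGraph V) : Prop :=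
  3 < Cardinal.mk V ∧
    ∀ A : Set V, Autonomous G A → A = ∅ ∨ (∃ x, A = {x}) ∨ A = Set.univ

/-- A graph is bipartite if its vertex set is partitioned into two independent sets. -/
def Bipartite {V : Type*} (G : SimpleGraph V) : Prop :=
  ∃ A B : Set V, A ∪ B = Set.univ ∧ Disjoint A B ∧
    (∀ u ∈ A, ∀ v ∈ A, ¬ G.Adj u v) ∧ (∀ u ∈ B, ∀ v ∈ B, ¬ G.Adj u v)

/-- If every vertex equals `x` or `y`, the type has at most two elements,
contradicting cardinality > 3. -/
lemma not_card_le_two {V : Type*} (hcard : 3 < Cardinal.mk V) (x y : V)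
    (h : ∀ v : V, v = x ∨ v = y) : False := by
  classical
  have hinj : Function.Injective
      (fun v : V => (ULift.up (if v = x then (0 : Fin 2) else 1) : ULift (Fin 2))) := by
    intro a b hab
    have hab' : (if a = x then (0 : Fin 2) else 1) = (if b = x then 0 else 1) :=
      congrArg ULift.down hab
    by_cases ha : a = x
    · by_cases hb : b = x
      · exact ha.trans hb.symm
      · rw [if_pos ha, if_neg hb] at hab'
        exact absurd hab' (by decide)
    · by_cases hb : b = x
      · rw [if_neg ha, if_pos hb] at hab'
        exact absurd hab' (by decide)
      · rcases h a with h' | h'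
        · exact absurd h' ha
        rcases h b with h'' | h''
        · exact absurd h'' hb
        exact h'.trans h''.symm
  have hle := Cardinal.mk_le_of_injective hinj
  simp only [Cardinal.mk_uLift, Cardinal.mk_fin, Cardinal.lift_ofNat] at hle
  exact absurd (hcard.trans_le hle) (by norm_num)

/-- A bipartite graph on more than three vertices is prime if and only if
it is connected and distinct vertices have distinct neighborhoods. -/
theorem bipartite_prime_iff {V : Type*} (G : SimpleGraph V)
    (hbip : Bipartite G) (hcard : 3 < Cardinal.mk V) :
    PrimeGraph G ↔
      (G.Connected ∧ ∀ x y : V, G.neighborSet x = G.neighborSet y → x = y) := by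
  classical
  constructor
  · rintro ⟨-, hprime⟩
    constructor
    · -- connected
      have hne : Nonempty V := by
        by_contra h
        rw [not_nonempty_iff] at h
        have : Cardinal.mk V = 0 := Cardinal.mk_eq_zero V
        rw [this] at hcard
        exact absurd hcard (by norm_num)
      obtain ⟨u⟩ := hne
      have hC : ∀ v : V, G.Reachable u v := by
        have hCuniv : {w | G.Reachable u w} = Set.univ := by
          set C : Set V := {w | G.Reachable u w} with hCdef
          have huC : u ∈ C := SimpleGraph.Reachable.refl u
          have hauto : Autonomous G C := by
            intro v hv
            right
            intro c hc hadj
            exact hv (hc.trans hadj.symm.reachable)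
          rcases hprime C hauto with h | ⟨x, hx⟩ | h
          · exact absurd huC (by simp [h])
          · exfalso
            have hauto' : Autonomous G Cᶜ := by
              intro v hv
              right
              intro c hc hadj
              exact hc ((not_not.mp hv).trans hadj.reachable)
            rcases hprime Cᶜ hauto' with h' | ⟨y, hy⟩ | h'
            · -- Cᶜ = ∅, so C = univ, but C = {x}: card ≤ 1
              apply not_card_le_two hcard x x
              intro v
              left
              have : v ∈ C := by
                by_contra hvc
                have : v ∈ Cᶜ := hvc
                rw [h'] at this
                exact this
              rw [hx] at this
              exact this
            · -- univ = {x, y}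
              apply not_card_le_two hcard x y
              intro v
              by_cases hvC : v ∈ C
              · left; rw [hx] at hvC; exact hvC
              · right
                have : v ∈ Cᶜ := hvC
                rw [hy] at this
                exact this
            · -- Cᶜ = univ
              have : u ∈ Cᶜ := h' ▸ Set.mem_univ u
              exact this huC
          · exact h
        intro v
        have : v ∈ {w | G.Reachable u w} := hCuniv ▸ Set.mem_univ v
        exact this
      have : Nonempty V := ⟨u⟩
      exact SimpleGraph.Connected.mk fun a b => (hC a).symm.trans (hC b)
    · -- twin-free
      intro x y hN
      by_contra hxy
      have hadjiff : ∀ v : V, G.Adj v x ↔ G.Adj v y := by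
        intro v
        constructor
        · intro h
          have : v ∈ G.neighborSet x := h.symm
          rw [hN] at this
          exact this.symm
        · intro h
          have : v ∈ G.neighborSet y := h.symm
          rw [← hN] at this
          exact this.symm
      have hauto : Autonomous G {x, y} := by
        intro v hv
        by_cases hadj : G.Adj v x
        · left
          rintro a (rfl | rfl)
          · exact hadj
          · exact (hadjiff v).mp hadj
        · right
          rintro a (rfl | rfl)
          · exact hadj
          · exact fun h => hadj ((hadjiff v).mpr h)
      rcases hprime _ hauto with h | ⟨z, hz⟩ | h
      · have : x ∈ ({x, y} : Set V) := Or.inl rfl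
        rw [h] at this
        exact this
      · have hx : x = z := by
          have : x ∈ ({x, y} : Set V) := Or.inl rfl
          rw [hz] at this; exact this
        have hy : y = z := by
          have : y ∈ ({x, y} : Set V) := Or.inr rfl
          rw [hz] at this; exact this
        exact hxy (hx.trans hy.symm)
      · exact not_card_le_two hcard x y fun v => by
          have : v ∈ ({x, y} : Set V) := h ▸ Set.mem_univ v
          exact this
  · rintro ⟨hconn, hdist⟩
    refine ⟨hcard, fun A hA => ?_⟩
    by_cases hAe : A = ∅
    · exact Or.inl hAe
    by_cases hAu : A = Set.univ
    · exact Or.inr (Or.inr hAu)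
    refine Or.inr (Or.inl ?_)
    obtain ⟨a, ha⟩ := Set.nonempty_iff_ne_empty.mpr hAe
    refine ⟨a, ?_⟩
    ext b
    simp only [Set.mem_singleton_iff]
    constructor
    · intro hb
      by_contra hba
      obtain ⟨v, hv⟩ : ∃ v, v ∉ A := by
        by_contra h
        push_neg at h
        exact hAu (Set.eq_univ_iff_forall.mpr h)
      obtain ⟨p⟩ := hconn.preconnected a v
      obtain ⟨d, _, hdf, hds⟩ := p.exists_boundary_dart A ha hv
      have hadjall : ∀ c ∈ A, G.Adj d.snd c := by
        rcases hA d.snd hds with h | h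
        · exact h
        · exact absurd d.adj.symm (h _ hdf)
      obtain ⟨X, Y, hXY, _, hX, hY⟩ := hbip
      have hmem : ∀ z : V, z ∈ X ∨ z ∈ Y := fun z => by
        have : z ∈ X ∪ Y := hXY ▸ Set.mem_univ z
        exact this
      have hindep : ∀ c ∈ A, ∀ c' ∈ A, ¬ G.Adj c c' := by
        intro c hc c' hc'
        rcases hmem d.snd with hw | hw
        · have hcY : c ∈ Y := by
            rcases hmem c with h | h
            · exact absurd (hadjall c hc) (hX _ hw _ h)
            · exact h
          have hc'Y : c' ∈ Y := by
            rcases hmem c' with h | h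
            · exact absurd (hadjall c' hc') (hX _ hw _ h)
            · exact h
          exact hY _ hcY _ hc'Y
        · have hcX : c ∈ X := by
            rcases hmem c with h | h
            · exact h
            · exact absurd (hadjall c hc) (hY _ hw _ h)
          have hc'X : c' ∈ X := by
            rcases hmem c' with h | h
            · exact h
            · exact absurd (hadjall c' hc') (hY _ hw _ h)
          exact hX _ hcX _ hc'X
      have hNab : G.neighborSet a = G.neighborSet b := by
        ext z
        simp only [SimpleGraph.mem_neighborSet]
        by_cases hz : z ∈ A
        · exact iff_of_false (hindep a ha z hz) (hindep b hb z hz)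
        · rcases hA z hz with h | h
          · exact iff_of_true (h a ha).symm (h b hb).symm
          · exact iff_of_false (fun had => h a ha had.symm) (fun had => h b hb had.symm)
      exact hba (hdist b a hNab.symm)
    · rintro rfl
      exact ha
end

section
/- A poset P is prime if and only if its comparability graph Comp(P) is prime. Moreover, if Comp(P) is prime, then the only partial orders on the same ground set whose comparability graph equals Comp(P) are P and its dual P*. -/
set_option autoImplicit false

/-- A subset `A` of a poset is autonomous if every element outside `A`
compares in the same way to all elements of `A`. -/
def PosetAutonomous {α : Type*} (P : PartialOrder α) (A : Set α) : Prop :=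
  ∀ v ∉ A, ∀ a ∈ A, ∀ a' ∈ A, (P.lt v a → P.lt v a') ∧ (P.lt a v → P.lt a' v)

/-- A poset is prime if it has more than three elements and its only
autonomous sets are the trivial ones. -/
def PosetPrime {α : Type*} (P : PartialOrder α) : Prop :=
  3 < Cardinal.mk α ∧
    ∀ A : Set α, PosetAutonomous P A → A = ∅ ∨ (∃ x, A = {x}) ∨ A = Set.univ

/-- The comparability graph of a poset: distinct comparable elements are adjacent. -/
def compGraph {α : Type*} (P : PartialOrder α) : SimpleGraph α :=
  SimpleGraph.fromRel (fun x y => P.le x y)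

section helpers
variable {α : Type*}

lemma plt_trans (P : PartialOrder α) {x y z : α} (h : P.lt x y) (h' : P.lt y z) : P.lt x z :=
  @lt_trans α (@PartialOrder.toPreorder α P) _ _ _ h h'

lemma plt_asymm (P : PartialOrder α) {x y : α} (h : P.lt x y) (h' : P.lt y x) : False :=
  @lt_asymm α (@PartialOrder.toPreorder α P) _ _ h h'

lemma plt_irrefl (P : PartialOrder α) (x : α) : ¬ P.lt x x :=
  @lt_irrefl α (@PartialOrder.toPreorder α P) x

lemma plt_iff (P : PartialOrder α) {x y : α} : P.lt x y ↔ P.le x y ∧ x ≠ y :=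
  @lt_iff_le_and_ne α P x y

lemma compGraph_adj (P : PartialOrder α) {x y : α} :
    (compGraph P).Adj x y ↔ P.lt x y ∨ P.lt y x := by
  unfold compGraph
  rw [SimpleGraph.fromRel_adj]
  constructor
  · rintro ⟨hne, h | h⟩
    · exact Or.inl ((plt_iff P).2 ⟨h, hne⟩)
    · exact Or.inr ((plt_iff P).2 ⟨h, hne.symm⟩)
  · rintro (h | h)
    · exact ⟨((plt_iff P).1 h).2, Or.inl ((plt_iff P).1 h).1⟩
    · exact ⟨(((plt_iff P).1 h).2).symm, Or.inr ((plt_iff P).1 h).1⟩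
end helpers

section Forcing
variable {α : Type*} (G : SimpleGraph α)

def Fstep : α × α → α × α → Prop := fun e f =>
  G.Adj e.1 e.2 ∧ G.Adj f.1 f.2 ∧
    ((e.1 = f.1 ∧ ¬ G.Adj e.2 f.2) ∨ (e.1 = f.2 ∧ ¬ G.Adj e.2 f.1) ∨
     (e.2 = f.1 ∧ ¬ G.Adj e.1 f.2) ∨ (e.2 = f.2 ∧ ¬ G.Adj e.1 f.1))

def Reach : α × α → α × α → Prop := Relation.ReflTransGen (Fstep G)

def ClsV (e : α × α) : Set α := {v | ∃ w, Reach G e (v, w)}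

def GoodAt (e : α × α) (a : α) (f : α × α) : Prop :=
  G.Adj a f.1 ∧ G.Adj a f.2 ∧ ¬ Reach G e (a, f.1) ∧ ¬ Reach G e (a, f.2)

variable {G}

lemma fstep_symm {e f : α × α} (h : Fstep G e f) : Fstep G f e := by
  obtain ⟨h1, h2, h3⟩ := h
  refine ⟨h2, h1, ?_⟩
  rcases h3 with ⟨h, h'⟩ | ⟨h, h'⟩ | ⟨h, h'⟩ | ⟨h, h'⟩
  · exact Or.inl ⟨h.symm, fun hh => h' hh.symm⟩
  · exact Or.inr (Or.inr (Or.inl ⟨h.symm, fun hh => h' hh.symm⟩))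
  · exact Or.inr (Or.inl ⟨h.symm, fun hh => h' hh.symm⟩)
  · exact Or.inr (Or.inr (Or.inr ⟨h.symm, fun hh => h' hh.symm⟩))

lemma reach_symm {e f : α × α} (h : Reach G e f) : Reach G f e := by
  induction h with
  | refl => exact .refl
  | tail _ hstep ih => exact (Relation.ReflTransGen.single (fstep_symm hstep)).trans ih

lemma reach_adj {e f : α × α} (he : G.Adj e.1 e.2) (h : Reach G e f) : G.Adj f.1 f.2 := by
  induction h with
  | refl => exact he
  | tail _ hstep _ => exact hstep.2.1

lemma fstep_swap {x y : α} (h : G.Adj x y) : Fstep G (x, y) (y, x) :=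
  ⟨h, h.symm, Or.inr (Or.inl ⟨rfl, fun hh => G.irrefl hh⟩)⟩

lemma reach_swap {e : α × α} {x y : α} (h : Reach G e (x, y)) (he : G.Adj e.1 e.2) :
    Reach G e (y, x) :=
  h.tail (fstep_swap (reach_adj he h))

lemma mem_clsV_fst {e f : α × α} (h : Reach G e f) : f.1 ∈ ClsV G e := ⟨f.2, h⟩

lemma mem_clsV_snd {e f : α × α} (he : G.Adj e.1 e.2) (h : Reach G e f) : f.2 ∈ ClsV G e :=
  ⟨f.1, reach_swap h he⟩

lemma adj_new {e0 : α × α} (he : G.Adj e0.1 e0.2) {v s n : α} (hv : v ∉ ClsV G e0)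
    (h : Reach G e0 (s, n)) (hvs : G.Adj v s) : G.Adj v n := by
  have hsn : G.Adj s n := reach_adj he h
  by_contra hna
  have hstep : Fstep G (s, n) (s, v) := ⟨hsn, hvs.symm, Or.inl ⟨rfl, fun hh => hna hh.symm⟩⟩
  exact hv (mem_clsV_snd he (h.tail hstep))

lemma clsV_autonomous {e0 : α × α} (he : G.Adj e0.1 e0.2) :
    (∀ v ∉ ClsV G e0, (∀ a ∈ ClsV G e0, G.Adj v a) ∨ (∀ a ∈ ClsV G e0, ¬ G.Adj v a)) := by
  intro v hv
  by_cases hex : ∃ z ∈ ClsV G e0, G.Adj v z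
  · left
    obtain ⟨z0, ⟨w0, hz0⟩, hadj⟩ := hex
    have key : ∀ f, Reach G (z0, w0) f → G.Adj v f.1 ∧ G.Adj v f.2 := by
      intro f hf
      induction hf with
      | refl => exact ⟨hadj, adj_new he hv hz0 hadj⟩
      | @tail b c hbc hstep ih =>
        have hc0 : Reach G e0 c := (hz0.trans hbc).tail hstep
        rcases hstep.2.2 with ⟨h, _⟩ | ⟨h, _⟩ | ⟨h, _⟩ | ⟨h, _⟩
        · exact ⟨h ▸ ih.1, adj_new he hv hc0 (h ▸ ih.1)⟩
        · exact ⟨adj_new he hv (reach_swap hc0 he) (h ▸ ih.1), h ▸ ih.1⟩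
        · exact ⟨h ▸ ih.2, adj_new he hv hc0 (h ▸ ih.2)⟩
        · exact ⟨adj_new he hv (reach_swap hc0 he) (h ▸ ih.2), h ▸ ih.2⟩
    intro z hz
    obtain ⟨w, hw⟩ := hz
    exact (key (z, w) ((reach_symm hz0).trans hw)).1
  · right
    intro z hz hadj
    exact hex ⟨z, hz, hadj⟩

lemma roll_step {e0 : α × α} (he : G.Adj e0.1 e0.2) {a s y n : α}
    (has : G.Adj a s) (hay : G.Adj a y) (hnas : ¬ Reach G e0 (a, s)) (hnay : ¬ Reach G e0 (a, y))
    (hsn : Reach G e0 (s, n)) (hyn : ¬ G.Adj y n) : G.Adj a n ∧ ¬ Reach G e0 (a, n) := by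
  have hadj_sn : G.Adj s n := reach_adj he hsn
  have han : G.Adj a n := by
    by_contra hcon
    have hstep : Fstep G (s, n) (s, a) := ⟨hadj_sn, has.symm, Or.inl ⟨rfl, fun hh => hcon hh.symm⟩⟩
    exact hnas (reach_swap (hsn.tail hstep) he)
  refine ⟨han, fun hr => hnay ?_⟩
  exact hr.tail ⟨han, hay, Or.inl ⟨rfl, fun hh => hyn hh.symm⟩⟩

lemma roll {e0 : α × α} (he : G.Adj e0.1 e0.2) {a : α} {b : α × α}
    (hb : Reach G e0 b) (hgood : GoodAt G e0 a b) :
    ∀ f, Reach G e0 f → GoodAt G e0 a f := by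
  intro f hf
  have hbf : Reach G b f := (reach_symm hb).trans hf
  clear hf
  induction hbf with
  | refl => exact hgood
  | @tail c d hbc hstep ih =>
    obtain ⟨h1, h2, h3, h4⟩ := ih
    have hd : Reach G e0 d := ((hb.trans hbc).tail hstep)
    rcases hstep.2.2 with ⟨h, h'⟩ | ⟨h, h'⟩ | ⟨h, h'⟩ | ⟨h, h'⟩
    · obtain ⟨han, hnan⟩ := roll_step he (h ▸ h1) h2 (h ▸ h3) h4 hd h'
      exact ⟨h ▸ h1, han, h ▸ h3, hnan⟩
    · obtain ⟨han, hnan⟩ := roll_step he (h ▸ h1) h2 (h ▸ h3) h4 (reach_swap hd he) h'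
      exact ⟨han, h ▸ h1, hnan, h ▸ h3⟩
    · obtain ⟨han, hnan⟩ := roll_step he (h ▸ h2) h1 (h ▸ h4) h3 hd h'
      exact ⟨h ▸ h2, han, h ▸ h4, hnan⟩
    · obtain ⟨han, hnan⟩ := roll_step he (h ▸ h2) h1 (h ▸ h4) h3 (reach_swap hd he) h'
      exact ⟨han, h ▸ h2, hnan, h ▸ h4⟩

lemma roll_contra {e0 : α × α} (he : G.Adj e0.1 e0.2) {a : α} {b : α × α}
    (hb : Reach G e0 b) (hgood : GoodAt G e0 a b) (hspan : ∀ v, v ∈ ClsV G e0) : False := by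
  obtain ⟨w, hw⟩ := hspan a
  exact ((roll he hb hgood (a, w) hw).1).ne rfl

end Forcing
section Two
variable {α : Type*}

def Agr (P Q : PartialOrder α) (x y : α) : Prop :=
  (P.lt x y ∧ Q.lt x y) ∨ (P.lt y x ∧ Q.lt y x)

lemma agr_symm (P Q : PartialOrder α) (x y : α) : Agr P Q x y ↔ Agr P Q y x := or_comm

lemma part2 (P : PartialOrder α) (hg : PrimeGraph (compGraph P)) (Q : PartialOrder α)
    (hQ : compGraph Q = compGraph P) :
    (∀ x y : α, Q.le x y ↔ P.le x y) ∨ (∀ x y : α, Q.le x y ↔ P.le y x) := by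
  set G := compGraph P with hGdef
  have adjP : ∀ x y, G.Adj x y ↔ P.lt x y ∨ P.lt y x := fun _ _ => compGraph_adj P
  have adjQ : ∀ x y, G.Adj x y ↔ Q.lt x y ∨ Q.lt y x := fun x y => by
    rw [← hQ]; exact compGraph_adj Q
  have key : ∀ a b c : α, G.Adj a b → G.Adj a c → ¬ G.Adj b c →
      (Agr P Q a b ↔ Agr P Q a c) := by
    intro a b c hab hac hbc
    by_cases hbceq : b = c
    · rw [hbceq]
    · have tPab := (adjP a b).1 hab
      have tPac := (adjP a c).1 hac
      have tQab := (adjQ a b).1 hab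
      have tQac := (adjQ a c).1 hac
      have hPiff : P.lt a b ↔ P.lt a c := by
        constructor
        · intro h1
          rcases tPac with h2 | h2
          · exact h2
          · exact absurd ((adjP b c).2 (Or.inr (plt_trans P h2 h1))) hbc
        · intro h1
          rcases tPab with h2 | h2
          · exact h2
          · exact absurd ((adjP b c).2 (Or.inl (plt_trans P h2 h1))) hbc
      have hQiff : Q.lt a b ↔ Q.lt a c := by
        constructor
        · intro h1
          rcases tQac with h2 | h2
          · exact h2
          · exact absurd ((adjQ b c).2 (Or.inr (plt_trans Q h2 h1))) hbc
        · intro h1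
          rcases tQab with h2 | h2
          · exact h2
          · exact absurd ((adjQ b c).2 (Or.inl (plt_trans Q h2 h1))) hbc
      constructor
      · rintro (⟨h1, h2⟩ | ⟨h1, h2⟩)
        · exact Or.inl ⟨hPiff.1 h1, hQiff.1 h2⟩
        · refine Or.inr ⟨?_, ?_⟩
          · rcases tPac with h3 | h3
            · exact (plt_asymm P (hPiff.2 h3) h1).elim
            · exact h3
          · rcases tQac with h3 | h3
            · exact (plt_asymm Q (hQiff.2 h3) h2).elim
            · exact h3
      · rintro (⟨h1, h2⟩ | ⟨h1, h2⟩)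
        · exact Or.inl ⟨hPiff.2 h1, hQiff.2 h2⟩
        · refine Or.inr ⟨?_, ?_⟩
          · rcases tPab with h3 | h3
            · exact (plt_asymm P (hPiff.1 h3) h1).elim
            · exact h3
          · rcases tQab with h3 | h3
            · exact (plt_asymm Q (hQiff.1 h3) h2).elim
            · exact h3
  have constancy : ∀ (e f : α × α), G.Adj e.1 e.2 → Reach G e f →
      (Agr P Q e.1 e.2 ↔ Agr P Q f.1 f.2) := by
    intro e f he hr
    induction hr with
    | refl => rfl
    | @tail c d _ hstep ih =>
      have hAc : G.Adj c.1 c.2 := hstep.1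
      have hAd : G.Adj d.1 d.2 := hstep.2.1
      refine ih.trans ?_
      rcases hstep.2.2 with ⟨h, h'⟩ | ⟨h, h'⟩ | ⟨h, h'⟩ | ⟨h, h'⟩
      · exact (key c.1 c.2 d.2 hAc (h ▸ hAd) h').trans (by rw [h])
      · exact ((key c.1 c.2 d.1 hAc (h ▸ hAd.symm) h').trans (by rw [h])).trans
          (agr_symm P Q d.2 d.1)
      · exact ((agr_symm P Q c.1 c.2).trans (key c.2 c.1 d.2 hAc.symm (h ▸ hAd) h')).trans
          (by rw [h])
      · exact (((agr_symm P Q c.1 c.2).trans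
          (key c.2 c.1 d.1 hAc.symm (h ▸ hAd.symm) h')).trans (by rw [h])).trans
          (agr_symm P Q d.2 d.1)
  by_cases hAll : ∀ x y : α, G.Adj x y → Agr P Q x y
  · left
    intro x y
    by_cases hxy : x = y
    · rw [hxy]; exact iff_of_true (Q.le_refl y) (P.le_refl y)
    · constructor
      · intro h
        have hq : Q.lt x y := (plt_iff Q).2 ⟨h, hxy⟩
        rcases hAll x y ((adjQ x y).2 (Or.inl hq)) with ⟨hp', _⟩ | ⟨_, hq'⟩
        · exact ((plt_iff P).1 hp').1
        · exact (plt_asymm Q hq hq').elim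
      · intro h
        have hplt : P.lt x y := (plt_iff P).2 ⟨h, hxy⟩
        rcases hAll x y ((adjP x y).2 (Or.inl hplt)) with ⟨_, hq'⟩ | ⟨hp', _⟩
        · exact ((plt_iff Q).1 hq').1
        · exact (plt_asymm P hplt hp').elim
  · by_cases hNone : ∀ x y : α, G.Adj x y → ¬ Agr P Q x y
    · right
      intro x y
      by_cases hxy : x = y
      · rw [hxy]; exact iff_of_true (Q.le_refl y) (P.le_refl y)
      · constructor
        · intro h
          have hq : Q.lt x y := (plt_iff Q).2 ⟨h, hxy⟩
          have hadj : G.Adj x y := (adjQ x y).2 (Or.inl hq)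
          rcases (adjP x y).1 hadj with hp' | hp'
          · exact absurd (Or.inl ⟨hp', hq⟩) (hNone x y hadj)
          · exact ((plt_iff P).1 hp').1
        · intro h
          have hplt : P.lt y x := (plt_iff P).2 ⟨h, fun hh => hxy hh.symm⟩
          have hadj : G.Adj x y := (adjP x y).2 (Or.inr hplt)
          rcases (adjQ x y).1 hadj with hq' | hq'
          · exact ((plt_iff Q).1 hq').1
          · exact absurd (Or.inr ⟨hplt, hq'⟩) (hNone x y hadj)
    · exfalso
      push_neg at hAll hNone
      obtain ⟨xb, yb, hBadj, hBdis⟩ := hAll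
      obtain ⟨xa, ya, hAadj, hAagr⟩ := hNone
      set eA : α × α := (xa, ya) with heAdef
      set eB : α × α := (xb, yb) with heBdef
      have heA : G.Adj eA.1 eA.2 := hAadj
      have heB : G.Adj eB.1 eB.2 := hBadj
      have hdiff : ¬ Reach G eA eB := fun hr => hBdis ((constancy eA eB heA hr).1 hAagr)
      have span : ∀ (e : α × α), G.Adj e.1 e.2 → ∀ v, v ∈ ClsV G e := by
        intro e he v
        rcases hg.2 _ (clsV_autonomous he) with h0 | ⟨t, ht⟩ | hu
        · exact absurd (mem_clsV_fst (G := G) (e := e) (f := e) .refl) (by rw [h0]; simp)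
        · exfalso
          have h1 : e.1 ∈ ClsV G e := mem_clsV_fst .refl
          have h2 : e.2 ∈ ClsV G e := mem_clsV_snd he .refl
          rw [ht] at h1 h2
          exact he.ne (h1.trans h2.symm)
        · rw [hu]; trivial
      have spanA := span eA heA
      have spanB := span eB heB
      have notAB : ∀ s w : α, Reach G eB (s, w) → ¬ Reach G eA (s, w) := fun s w h2 hr =>
        hdiff (hr.trans (reach_symm h2))
      have cross : ∀ s y w : α, Reach G eA (s, y) → Reach G eB (s, w) → G.Adj y w := by
        intro s y w h1 h2
        have hne : ¬ Reach G eA (s, w) := notAB s w h2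
        by_contra hna
        exact hne (h1.tail ⟨reach_adj heA h1, reach_adj heB h2, Or.inl ⟨rfl, hna⟩⟩)
      obtain ⟨w, hxw⟩ := spanB eA.1
      have hrefA : Reach G eA (eA.1, eA.2) := .refl
      have hyaw : G.Adj eA.2 w := cross eA.1 eA.2 w hrefA hxw
      by_cases h1 : Reach G eA (w, eA.2)
      · obtain ⟨u, hyu⟩ := spanB eA.2
        have hswapA : Reach G eA (eA.2, eA.1) := reach_swap hrefA heA
        have hxu : G.Adj eA.1 u := cross eA.2 eA.1 u hswapA hyu
        have hwy : Reach G eA (eA.2, w) := reach_swap h1 heA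
        have hwu : G.Adj w u := cross eA.2 w u hwy hyu
        by_cases h2 : Reach G eA (u, eA.1)
        · by_cases h3 : Reach G eA (u, w)
          · refine roll_contra heB hxw ⟨heA.symm, hyaw, ?_, ?_⟩ spanB
            · exact fun hr => hdiff (hswapA.trans (reach_symm hr))
            · exact fun hr => hdiff (hwy.trans (reach_symm hr))
          · refine roll_contra heA h2 ⟨hwu, (reach_adj heB hxw).symm, ?_, ?_⟩ spanA
            · exact fun hr => h3 (reach_swap hr heA)
            · exact fun hr => notAB eA.1 w hxw (reach_swap hr heA)
        · refine roll_contra heA hrefA ⟨hxu.symm, (reach_adj heB hyu).symm, h2, ?_⟩ spanA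
          exact fun hr => notAB eA.2 u hyu (reach_swap hr heA)
      · refine roll_contra heA hrefA ⟨(reach_adj heB hxw).symm, hyaw.symm, ?_, h1⟩ spanA
        exact fun hr => notAB eA.1 w hxw (reach_swap hr heA)
end Two
section PartOne
variable {α : Type*}

lemma part1_mpr (P : PartialOrder α) (hg : PrimeGraph (compGraph P)) : PosetPrime P := by
  refine ⟨hg.1, fun A hA => hg.2 A ?_⟩
  intro v hv
  by_cases hex : ∃ a ∈ A, (compGraph P).Adj v a
  · left
    obtain ⟨a, ha, hadj⟩ := hex
    intro a' ha'
    rcases (compGraph_adj P).1 hadj with hlt | hlt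
    · exact (compGraph_adj P).2 (Or.inl ((hA v hv a ha a' ha').1 hlt))
    · exact (compGraph_adj P).2 (Or.inr ((hA v hv a ha a' ha').2 hlt))
  · right
    exact fun a ha hadj => hex ⟨a, ha, hadj⟩

lemma part1_mp (P : PartialOrder α) (hp : PosetPrime P) : PrimeGraph (compGraph P) := by
  refine ⟨hp.1, ?_⟩
  intro A hA
  by_contra hcon
  push_neg at hcon
  obtain ⟨hne, hns, hnu⟩ := hcon
  obtain ⟨a, ha⟩ := hne
  obtain ⟨b, hb, hba⟩ : ∃ b ∈ A, b ≠ a := by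
    by_contra hbc
    push_neg at hbc
    exact hns a (Set.eq_singleton_iff_unique_mem.2 ⟨ha, hbc⟩)
  obtain ⟨c, hc⟩ : ∃ c, c ∉ A := by
    by_contra hcc
    push_neg at hcc
    exact hnu (Set.eq_univ_of_forall hcc)
  set G := compGraph P with hGdef
  have adjP : ∀ x y, G.Adj x y ↔ P.lt x y ∨ P.lt y x := fun _ _ => compGraph_adj P
  -- incomparability relation inside A
  set Inc : α → α → Prop := fun x y => x ∈ A ∧ y ∈ A ∧ x ≠ y ∧ ¬ G.Adj x y with hIncdef
  have incsymm : ∀ {x y}, Inc x y → Inc y x :=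
    fun ⟨h1, h2, h3, h4⟩ => ⟨h2, h1, h3.symm, fun hh => h4 hh.symm⟩
  set C : α → Set α := fun a0 => {x | Relation.ReflTransGen Inc a0 x} with hCdef
  have hCsub : ∀ {a0 : α}, a0 ∈ A → ∀ {x}, x ∈ C a0 → x ∈ A := by
    intro a0 ha0 x hx
    induction hx with
    | refl => exact ha0
    | tail _ hstep _ => exact hstep.2.1
  have hCtrans : ∀ {a0 x y : α}, x ∈ C a0 → Relation.ReflTransGen Inc x y → y ∈ C a0 :=
    fun hx hxy => Relation.ReflTransGen.trans hx hxy
  have hIncRev : ∀ {x y : α}, Relation.ReflTransGen Inc x y → Relation.ReflTransGen Inc y x := by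
    intro x y h
    induction h with
    | refl => exact .refl
    | tail _ hstep ih => exact (Relation.ReflTransGen.single (incsymm hstep)).trans ih
  have hCadj : ∀ {a0 : α}, a0 ∈ A → ∀ {v}, v ∉ C a0 → ∀ {x}, x ∈ C a0 → G.Adj v x →
      ∀ {z}, z ∈ C a0 → G.Adj v z := by
    intro a0 ha0 v hv x hx hadj z hz
    by_cases hvA : v ∈ A
    · have hpath : Relation.ReflTransGen Inc x z := (hIncRev hx).trans hz
      clear hz
      induction hpath with
      | refl => exact hadj
      | @tail y z' hxy hstep ih =>
        have hz'C : z' ∈ C a0 := hCtrans hx (hxy.tail hstep)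
        by_contra hnadj
        have hvz' : v ≠ z' := fun hh => hv (hh ▸ hz'C)
        have : v ∈ C a0 :=
          hCtrans hz'C (Relation.ReflTransGen.single ⟨hstep.2.1, hvA, hvz'.symm, fun hh => hnadj hh.symm⟩)
        exact hv this
    · rcases hA v hvA with hall | hnone
      · exact hall z (hCsub ha0 hz)
      · exact absurd hadj (hnone x (hCsub ha0 hx))
  have hside : ∀ {a0 : α}, a0 ∈ A → ∀ {v}, v ∉ C a0 → ∀ {x z}, x ∈ C a0 →
      Relation.ReflTransGen Inc x z → P.lt v x → P.lt v z := by
    intro a0 ha0 v hv x z hx hpath hvx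
    induction hpath with
    | refl => exact hvx
    | @tail y z' hxy hstep ih =>
      have hz'C : z' ∈ C a0 := hCtrans hx (hxy.tail hstep)
      have hadjvz' : G.Adj v z' := hCadj ha0 hv hx ((adjP v x).2 (Or.inl hvx)) hz'C
      rcases (adjP v z').1 hadjvz' with h | h
      · exact h
      · exact absurd ((adjP y z').2 (Or.inr (plt_trans P h ih))) (fun hh => hstep.2.2.2 hh)
  have hside' : ∀ {a0 : α}, a0 ∈ A → ∀ {v}, v ∉ C a0 → ∀ {x z}, x ∈ C a0 →
      Relation.ReflTransGen Inc x z → P.lt x v → P.lt z v := by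
    intro a0 ha0 v hv x z hx hpath hxv
    induction hpath with
    | refl => exact hxv
    | @tail y z' hxy hstep ih =>
      have hz'C : z' ∈ C a0 := hCtrans hx (hxy.tail hstep)
      have hadjvz' : G.Adj v z' := hCadj ha0 hv hx ((adjP v x).2 (Or.inr hxv)) hz'C
      rcases (adjP v z').1 hadjvz' with h | h
      · exact absurd ((adjP y z').2 (Or.inl (plt_trans P ih h))) (fun hh => hstep.2.2.2 hh)
      · exact h
  have hCauto : ∀ {a0 : α}, a0 ∈ A → PosetAutonomous P (C a0) := by
    intro a0 ha0 v hv x hx x' hx'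
    have hpath : Relation.ReflTransGen Inc x x' := (hIncRev hx).trans hx'
    exact ⟨fun h => hside ha0 hv hx hpath h, fun h => hside' ha0 hv hx hpath h⟩
  have hchain : ∀ x ∈ A, ∀ y ∈ A, x ≠ y → G.Adj x y := by
    intro x hx y hy hxy
    by_contra hnadj
    have hyC : y ∈ C x := Relation.ReflTransGen.single ⟨hx, hy, hxy, hnadj⟩
    have hxC : x ∈ C x := .refl
    rcases hp.2 (C x) (hCauto hx) with h0 | ⟨t, ht⟩ | hu
    · rw [h0] at hxC; exact hxC
    · rw [ht] at hxC hyC; exact hxy (hxC.trans hyC.symm)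
    · exact hc (hCsub hx (hu ▸ Set.mem_univ c))
  have hcomp : ∀ x ∈ A, ∀ y ∈ A, x ≠ y → P.lt x y ∨ P.lt y x :=
    fun x hx y hy hxy => (adjP x y).1 (hchain x hx y hy hxy)
  -- the saturation B of A
  set B : Set α := A ∪ {v | v ∉ A ∧ ∃ d ∈ A, ∃ u ∈ A, P.lt d v ∧ P.lt v u} with hBdef
  have hAB : A ⊆ B := Set.subset_union_left
  have hinscomp : ∀ {v}, v ∉ A → (∃ d ∈ A, G.Adj v d) → ∀ t ∈ A, G.Adj v t := by
    rintro v hvA ⟨d, hd, hadj⟩ t ht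
    rcases hA v hvA with hall | hnone
    · exact hall t ht
    · exact absurd hadj (hnone d hd)
  have hBauto : PosetAutonomous P B := by
    intro w hw x hx x' hx'
    have hwA : w ∉ A := fun h => hw (hAB h)
    rcases hA w hwA with hall | hnone
    · have hcompA : ∀ t ∈ A, P.lt w t ∨ P.lt t w := fun t ht => (adjP w t).1 (hall t ht)
      have hsplit : (∀ d ∈ A, ¬ P.lt d w) ∨ (∀ u ∈ A, ¬ P.lt w u) := by
        by_contra hq
        push_neg at hq
        obtain ⟨⟨d, hd, hdw⟩, ⟨u, hu, hwu⟩⟩ := hq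
        exact hw (Or.inr ⟨hwA, d, hd, u, hu, hdw, hwu⟩)
      rcases hsplit with hlow | hhigh
      · have hwb : ∀ t ∈ B, P.lt w t := by
          rintro t (htA | ⟨_, d, hd, _, _, hdt, _⟩)
          · rcases hcompA t htA with h | h
            · exact h
            · exact absurd h (hlow t htA)
          · refine plt_trans P ?_ hdt
            rcases hcompA d hd with h | h
            · exact h
            · exact absurd h (hlow d hd)
        exact ⟨fun _ => hwb x' hx', fun hxw => (plt_asymm P (hwb x hx) hxw).elim⟩
      · have hbw : ∀ t ∈ B, P.lt t w := by
          rintro t (htA | ⟨_, _, _, u, hu, _, htu⟩)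
          · rcases hcompA t htA with h | h
            · exact absurd h (hhigh t htA)
            · exact h
          · refine plt_trans P htu ?_
            rcases hcompA u hu with h | h
            · exact absurd h (hhigh u hu)
            · exact h
        exact ⟨fun hwx => (plt_asymm P (hbw x hx) hwx).elim, fun _ => hbw x' hx'⟩
    · have hnot : ∀ s ∈ A, ¬ (P.lt w s ∨ P.lt s w) := fun s hs hor => hnone s hs ((adjP w s).2 hor)
      have hninc : ∀ t ∈ B, ¬ P.lt w t ∧ ¬ P.lt t w := by
        rintro t (htA | ⟨_, d, hd, u, hu, hdt, htu⟩)
        · exact ⟨fun h => hnot t htA (Or.inl h), fun h => hnot t htA (Or.inr h)⟩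
        · exact ⟨fun h => hnot u hu (Or.inl (plt_trans P h htu)),
            fun h => hnot d hd (Or.inr (plt_trans P hdt h))⟩
      exact ⟨fun h => ((hninc x hx).1 h).elim, fun h => ((hninc x hx).2 h).elim⟩
  have hBuniv : B = Set.univ := by
    rcases hp.2 B hBauto with h0 | ⟨t, ht⟩ | hu
    · exfalso
      have := hAB ha
      rw [h0] at this
      exact this
    · exfalso
      have h1 := hAB ha
      have h2 := hAB hb
      rw [ht] at h1 h2
      exact hba (h2.trans h1.symm)
    · exact hu
  have hcompall : ∀ x : α, ∀ t ∈ A, x ≠ t → P.lt x t ∨ P.lt t x := by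
    intro x t ht hxt
    by_cases hxA : x ∈ A
    · exact hcomp x hxA t ht hxt
    · have hxB : x ∈ B := hBuniv ▸ Set.mem_univ x
      rcases hxB with h | ⟨_, d, hd, u, hu, hdx, hxu⟩
      · exact absurd h hxA
      · exact (adjP x t).1 (hinscomp hxA ⟨u, hu, (adjP x u).2 (Or.inl hxu)⟩ t ht)
  have final : ∀ x y : α, x ∈ A → y ∈ A → P.lt x y → False := by
    intro x y hxA hyA hxy
    set M : Set α := {z | P.lt z y} with hMdef
    have hMauto : PosetAutonomous P M := by
      intro v hv z hz z' hz'
      constructor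
      · intro hvz
        exact (hv (plt_trans P hvz hz)).elim
      · intro _
        by_cases hvy : v = y
        · rw [hvy]; exact hz'
        · rcases hcompall v y hyA hvy with h | h
          · exact (hv h).elim
          · exact plt_trans P hz' h
    have hMx : ∀ z ∈ M, z = x := by
      rcases hp.2 M hMauto with h0 | ⟨t, ht⟩ | hu
      · exfalso
        have : x ∈ M := hxy
        rw [h0] at this
        exact this
      · intro z hz
        have h1 : x ∈ M := hxy
        rw [ht] at h1 hz
        exact hz.trans h1.symm
      · exfalso
        have : y ∈ M := hu ▸ Set.mem_univ y
        exact plt_irrefl P y this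
    set M' : Set α := {z | P.lt x z} with hM'def
    have hM'auto : PosetAutonomous P M' := by
      intro v hv z hz z' hz'
      constructor
      · intro _
        by_cases hvx : v = x
        · rw [hvx]; exact hz'
        · rcases hcompall v x hxA hvx with h | h
          · exact plt_trans P h hz'
          · exact (hv h).elim
      · intro hzv
        exact (hv (plt_trans P hz hzv)).elim
    have hM'y : ∀ z ∈ M', z = y := by
      rcases hp.2 M' hM'auto with h0 | ⟨t, ht⟩ | hu
      · exfalso
        have : y ∈ M' := hxy
        rw [h0] at this
        exact this
      · intro z hz
        have h1 : y ∈ M' := hxy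
        rw [ht] at h1 hz
        exact hz.trans h1.symm
      · exfalso
        have : x ∈ M' := hu ▸ Set.mem_univ x
        exact plt_irrefl P x this
    have hxy2 : ∀ t : α, t = x ∨ t = y := by
      intro t
      by_cases h1 : t = x
      · exact Or.inl h1
      by_cases h2 : t = y
      · exact Or.inr h2
      exfalso
      rcases hcompall t x hxA h1 with h | h
      · exact h1 (hMx t (plt_trans P h hxy))
      · exact h2 (hM'y t h)
    have hcard : Cardinal.mk α ≤ 2 := by
      have hsub : (Set.univ : Set α) ⊆ {x, y} := by
        intro t _
        rcases hxy2 t with h1 | h1 <;> simp [h1]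
      calc Cardinal.mk α = Cardinal.mk (Set.univ : Set α) := Cardinal.mk_univ.symm
        _ ≤ Cardinal.mk ({x, y} : Set α) := Cardinal.mk_le_mk_of_subset hsub
        _ ≤ Cardinal.mk ({y} : Set α) + 1 := Cardinal.mk_insert_le
        _ = 2 := by rw [Cardinal.mk_singleton]; norm_num
    exact absurd (hp.1.trans_le hcard) (by norm_num)
  rcases hcomp a ha b hb (Ne.symm hba) with hab | hba'
  · exact final a b ha hb hab
  · exact final b a hb ha hba'

end PartOne

/-- A poset is prime iff its comparability graph is prime; moreover a prime
comparability graph has exactly two transitive orientations, the order and its dual. -/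
theorem poset_prime_iff_compGraph_prime {α : Type*} (P : PartialOrder α) :
    (PosetPrime P ↔ PrimeGraph (compGraph P)) ∧
    (PrimeGraph (compGraph P) →
      ∀ Q : PartialOrder α, compGraph Q = compGraph P →
        (∀ x y : α, Q.le x y ↔ P.le x y) ∨ (∀ x y : α, Q.le x y ↔ P.le y x)) :=
  ⟨⟨part1_mp P, part1_mpr P⟩, part2 P⟩
end

section
/- Let G be a graph with no infinite clique. Then the neighborhood lattice N̂(G) contains an infinite chain if and only if G contains an induced subgraph isomorphic to G0 or to G1. -/
set_option autoImplicit false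

/-- The bipartite graph `G0` on `A ∪ B` (`A, B` the two copies of `ℕ`),
with an edge `{a_i, b_j}` iff `i ≠ j`. -/
def G0 : SimpleGraph (ℕ ⊕ ℕ) :=
  SimpleGraph.fromRel (fun u v => ∃ i j : ℕ, u = Sum.inl i ∧ v = Sum.inr j ∧ i ≠ j)

/-- The bipartite graph `G1` (half complete bipartite graph),
with an edge `{a_i, b_j}` iff `i < j`. -/
def G1 : SimpleGraph (ℕ ⊕ ℕ) :=
  SimpleGraph.fromRel (fun u v => ∃ i j : ℕ, u = Sum.inl i ∧ v = Sum.inr j ∧ i < j)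

/-- The neighborhood lattice of a graph: all intersections of neighborhoods
(the whole vertex set being the empty intersection), ordered by inclusion. -/
def nhdLattice {V : Type*} (G : SimpleGraph V) : Set (Set V) :=
  {X | ∃ S : Set V, X = ⋂ x ∈ S, G.neighborSet x}

/-!
Separating consecutive members of a strictly monotone chain in `N̂(G)` by a vertex `b_n` and a
neighbourhood `N(a_n)` gives sequences with `a_n ≁ b_n` and `a_n ~ b_m` for `n < m` (a ladder);
conversely a ladder makes `⋂_{i ≤ n} N(a_i)` strictly decreasing. By Ramsey's theorem for pairs a
ladder can be thinned so that adjacency among the `a`s, among the `b`s, and between `a_m` and `b_n`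
for `n < m` are each constant. With no infinite clique the first two are non-adjacency, and the
third decides between `G0` and `G1`.
-/

open Filter Function

-- Ramsey for pairs: `col i` is the colour `c i j` takes for ultrafilter-almost all `j`.
theorem exists_strictMono_monochromatic {K : Type*} [Finite K] (c : ℕ → ℕ → K) :
    ∃ g : ℕ → ℕ, StrictMono g ∧ ∃ k, ∀ i j, i < j → c (g i) (g j) = k := by
  let U := hyperfilter ℕ
  have eventually_const (f : ℕ → K) : ∃ k, ∀ᶠ j in U, f j = k :=
    U.eventually_exists_iff.1 (.of_forall fun j => ⟨f j, rfl⟩)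
  choose col hcol using fun i => eventually_const (c i)
  obtain ⟨k, hk⟩ := eventually_const col
  obtain ⟨g, -, hg⟩ := exists_seq_of_forall_finset_exists (fun i => col i = k)
    (fun i j => i < j ∧ c i j = k) fun s hs =>
      (hk.and ((eventually_all_finset s).2 fun i hi =>
        (Eventually.filter_mono Nat.hyperfilter_le_atTop (eventually_gt_atTop i)).and
          (hs i hi ▸ hcol i))).exists
  exact ⟨g, fun i j h => (hg i j h).1, k, fun i j h => (hg i j h).2⟩

theorem IsChain.exists_strictMono_or_strictAnti {α : Type*} [PartialOrder α] {s : Set α}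
    (hs : IsChain (· ≤ ·) s) (hinf : s.Infinite) :
    ∃ f : ℕ → α, (∀ n, f n ∈ s) ∧ (StrictMono f ∨ StrictAnti f) := by
  classical
  let := hs.linearOrder
  have := hinf.to_subtype
  obtain ⟨f, hf⟩ := Infinite.exists_strictMono_or_strictAnti s
  exact ⟨fun n => f n, fun n => (f n).2,
    hf.imp (Subtype.strictMono_coe _).comp (Subtype.strictMono_coe _).comp_strictAnti⟩

-- `G0` and `G1` are definitionally `bipartiteOfRel (· ≠ ·)` and `bipartiteOfRel (· < ·)`.
def bipartiteOfRel (R : ℕ → ℕ → Prop) : SimpleGraph (ℕ ⊕ ℕ) :=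
  SimpleGraph.fromRel (fun u v => ∃ i j : ℕ, u = Sum.inl i ∧ v = Sum.inr j ∧ R i j)

section bipartiteOfRel

variable (R : ℕ → ℕ → Prop) (i j : ℕ)

@[simp]
theorem bipartiteOfRel_adj_inl_inr : (bipartiteOfRel R).Adj (.inl i) (.inr j) ↔ R i j := by
  simp [bipartiteOfRel]

@[simp]
theorem bipartiteOfRel_adj_inr_inl : (bipartiteOfRel R).Adj (.inr j) (.inl i) ↔ R i j := by
  simp [bipartiteOfRel]

@[simp]
theorem bipartiteOfRel_not_adj_inl_inl : ¬ (bipartiteOfRel R).Adj (.inl i) (.inl j) := by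
  simp [bipartiteOfRel]

@[simp]
theorem bipartiteOfRel_not_adj_inr_inr : ¬ (bipartiteOfRel R).Adj (.inr i) (.inr j) := by
  simp [bipartiteOfRel]

end bipartiteOfRel

namespace SimpleGraph

variable {V W : Type*}

def HasLadder (G : SimpleGraph V) : Prop :=
  ∃ a b : ℕ → V, (∀ n, ¬ G.Adj (a n) (b n)) ∧ ∀ n m, n < m → G.Adj (a n) (b m)

variable {G : SimpleGraph V}

theorem HasLadder.map {H : SimpleGraph W} (f : H ↪g G) : H.HasLadder → G.HasLadder
  | ⟨a, b, hdiag, hlt⟩ => ⟨f ∘ a, f ∘ b, fun n => f.map_adj_iff.not.2 (hdiag n),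
      fun n m h => f.map_adj_iff.2 (hlt n m h)⟩

theorem hasLadder_bipartiteOfRel {R : ℕ → ℕ → Prop} (hirr : ∀ i, ¬ R i i)
    (hlt : ∀ i j, i < j → R i j) : (bipartiteOfRel R).HasLadder :=
  ⟨.inl, .inr, by simpa using hirr, by simpa using hlt⟩

theorem hasLadder_G0 : G0.HasLadder :=
  hasLadder_bipartiteOfRel (fun _ h => h rfl) fun _ _ h => h.ne

theorem hasLadder_G1 : G1.HasLadder :=
  hasLadder_bipartiteOfRel lt_irrefl fun _ _ h => h

theorem exists_not_adj_of_mem_nhdLattice {X : Set V} (hX : X ∈ nhdLattice G) {v : V}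
    (hv : v ∉ X) : ∃ x, X ⊆ G.neighborSet x ∧ ¬ G.Adj x v := by
  obtain ⟨S, rfl⟩ := hX
  simp only [Set.mem_iInter, not_forall] at hv
  obtain ⟨x, hx, hxv⟩ := hv
  exact ⟨x, Set.biInter_subset_of_mem hx, hxv⟩

theorem hasLadder_of_strictAnti {Y : ℕ → Set V} (hY : ∀ n, Y n ∈ nhdLattice G)
    (hanti : StrictAnti Y) : G.HasLadder := by
  choose b hb hb' using fun n : ℕ => Set.exists_of_ssubset (hanti n.lt_succ_self)
  choose a ha ha' using fun n => exists_not_adj_of_mem_nhdLattice (hY (n + 1)) (hb' n)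
  exact ⟨a, b, ha', fun n m h => ha n (hanti.antitone h (hb m))⟩

theorem hasLadder_of_strictMono {Y : ℕ → Set V} (hY : ∀ n, Y n ∈ nhdLattice G)
    (hmono : StrictMono Y) : G.HasLadder := by
  choose b hb hb' using fun n : ℕ => Set.exists_of_ssubset (hmono n.lt_succ_self)
  choose a ha ha' using fun n => exists_not_adj_of_mem_nhdLattice (hY n) (hb' n)
  exact ⟨b, a, fun n h => ha' n h.symm, fun n m h => (ha m (hmono.monotone h (hb n))).symm⟩

theorem hasLadder_of_infinite_chain {C : Set (Set V)} (hC : C ⊆ nhdLattice G)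
    (hinf : C.Infinite) (hchain : IsChain (· ⊆ ·) C) : G.HasLadder := by
  obtain ⟨Y, hYC, hY | hY⟩ := hchain.exists_strictMono_or_strictAnti hinf
  exacts [hasLadder_of_strictMono (fun n => hC (hYC n)) hY,
    hasLadder_of_strictAnti (fun n => hC (hYC n)) hY]

theorem HasLadder.exists_infinite_chain (h : G.HasLadder) :
    ∃ C : Set (Set V), C ⊆ nhdLattice G ∧ C.Infinite ∧ IsChain (· ⊆ ·) C := by
  obtain ⟨a, b, hdiag, hlt⟩ := h
  let X : ℕ → Set V := fun n => ⋂ i ∈ Set.Iic n, G.neighborSet (a i)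
  have hanti : StrictAnti X := by
    refine strictAnti_nat_of_succ_lt fun n => ?_
    have hsub : X (n + 1) ⊆ X n :=
      Set.biInter_subset_biInter_left (Set.Iic_subset_Iic.2 n.le_succ)
    have hmem : b (n + 1) ∈ X n :=
      Set.mem_iInter₂.2 fun i hi => hlt i (n + 1) (Nat.lt_succ_of_le hi)
    exact hsub.ssubset_of_not_subset fun h =>
      hdiag (n + 1) (Set.mem_iInter₂.1 (h hmem) (n + 1) Set.self_mem_Iic)
  refine ⟨Set.range X, ?_, Set.infinite_range_of_injective hanti.injective,
    hanti.antitone.isChain_range⟩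
  rintro _ ⟨n, rfl⟩
  exact ⟨a '' Set.Iic n, by rw [Set.biInter_image]⟩

theorem exists_infinite_isClique_of_forall_lt_adj {f : ℕ → V}
    (h : ∀ i j, i < j → G.Adj (f i) (f j)) : ∃ S : Set V, S.Infinite ∧ G.IsClique S := by
  have hinj : Injective f := Injective.of_lt_imp_ne fun i j hij => (h i j hij).ne
  refine ⟨Set.range f, Set.infinite_range_of_injective hinj, ?_⟩
  rintro _ ⟨i, rfl⟩ _ ⟨j, rfl⟩ hne
  exact (ne_of_apply_ne f hne).lt_or_gt.elim (h i j) fun hji => (h j i hji).symm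

theorem not_adj_of_forall_lt_adj_iff (hclique : ¬ ∃ S : Set V, S.Infinite ∧ G.IsClique S)
    {f : ℕ → V} {p : Prop} (h : ∀ i j, i < j → (G.Adj (f i) (f j) ↔ p)) (i j : ℕ) :
    ¬ G.Adj (f i) (f j) := by
  have hp : ¬ p := fun hp =>
    hclique (exists_infinite_isClique_of_forall_lt_adj fun i j hij => (h i j hij).2 hp)
  intro hadj
  rcases lt_trichotomy i j with hij | rfl | hji
  · exact hp ((h i j hij).1 hadj)
  · exact G.irrefl hadj
  · exact hp ((h j i hji).1 hadj.symm)

theorem injective_sumElim_of_ladder {a b : ℕ → V} (hdiag : ∀ n, ¬ G.Adj (a n) (b n))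
    (hlt : ∀ n m, n < m → G.Adj (a n) (b m)) (hb : ∀ i j, ¬ G.Adj (b i) (b j)) :
    Injective (Sum.elim a b) := by
  refine Injective.sumElim ?_ ?_ fun i j he => hb j (max i j + 1) (he ▸ hlt i _ (by omega))
  · exact Injective.of_lt_imp_ne fun i j hij he => hdiag j (he ▸ hlt i j hij)
  · exact Injective.of_lt_imp_ne fun i j hij he => hdiag i (he ▸ hlt i j hij)

theorem nonempty_bipartiteOfRel_embedding {R : ℕ → ℕ → Prop} {a b : ℕ → V}
    (hinj : Injective (Sum.elim a b)) (ha : ∀ i j, ¬ G.Adj (a i) (a j))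
    (hb : ∀ i j, ¬ G.Adj (b i) (b j)) (hab : ∀ i j, G.Adj (a i) (b j) ↔ R i j) :
    Nonempty (bipartiteOfRel R ↪g G) :=
  ⟨⟨⟨Sum.elim a b, hinj⟩, by rintro (i | i) (j | j) <;> simp [ha, hb, hab, G.adj_comm (b _)]⟩⟩

theorem nonempty_G0_or_G1_embedding_of_ladder {a b : ℕ → V} {p : Prop}
    (hdiag : ∀ n, ¬ G.Adj (a n) (b n)) (hlt : ∀ n m, n < m → G.Adj (a n) (b m))
    (hgt : ∀ n m, m < n → (G.Adj (a n) (b m) ↔ p))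
    (ha : ∀ i j, ¬ G.Adj (a i) (a j)) (hb : ∀ i j, ¬ G.Adj (b i) (b j)) :
    Nonempty (G0 ↪g G) ∨ Nonempty (G1 ↪g G) := by
  have hab : ∀ i j, G.Adj (a i) (b j) ↔ i < j ∨ p ∧ j < i := by
    intro i j
    rcases lt_trichotomy i j with hij | rfl | hji
    · simp [hij, hlt i j hij]
    · simp [hdiag]
    · simp [hgt i j hji, hji, hji.not_gt]
  have hinj := injective_sumElim_of_ladder hdiag hlt hb
  by_cases hp : p
  · exact .inl (nonempty_bipartiteOfRel_embedding hinj ha hb fun i j => by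
      simp only [hab, hp, true_and]; omega)
  · exact .inr (nonempty_bipartiteOfRel_embedding hinj ha hb fun i j => by simp [hab, hp])

theorem HasLadder.nonempty_G0_or_G1_embedding (h : G.HasLadder)
    (hclique : ¬ ∃ S : Set V, S.Infinite ∧ G.IsClique S) :
    Nonempty (G0 ↪g G) ∨ Nonempty (G1 ↪g G) := by
  obtain ⟨a, b, hdiag, hlt⟩ := h
  obtain ⟨g, hg, ⟨_, _, p⟩, hk⟩ := exists_strictMono_monochromatic fun i j =>
    (G.Adj (a i) (a j), G.Adj (b i) (b j), G.Adj (a j) (b i))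
  exact nonempty_G0_or_G1_embedding_of_ladder (a := a ∘ g) (b := b ∘ g) (p := p)
    (fun n => hdiag (g n)) (fun n m h => hlt _ _ (hg h))
    (fun n m h => Iff.of_eq (congrArg (·.2.2) (hk m n h)))
    (not_adj_of_forall_lt_adj_iff hclique fun i j h => Iff.of_eq (congrArg (·.1) (hk i j h)))
    (not_adj_of_forall_lt_adj_iff hclique fun i j h => Iff.of_eq (congrArg (·.2.1) (hk i j h)))

end SimpleGraph

/-- For a graph without infinite cliques, the neighborhood lattice contains an
infinite chain iff the graph contains an induced copy of `G0` or of `G1`. -/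
theorem nhdLattice_infinite_chain_iff {V : Type*} (G : SimpleGraph V)
    (hclique : ¬ ∃ S : Set V, S.Infinite ∧ G.IsClique S) :
    (∃ C : Set (Set V), C ⊆ nhdLattice G ∧ C.Infinite ∧ IsChain (· ⊆ ·) C) ↔
      (Nonempty (G0 ↪g G) ∨ Nonempty (G1 ↪g G)) := by
  constructor
  · rintro ⟨C, hC, hinf, hchain⟩
    exact (G.hasLadder_of_infinite_chain hC hinf hchain).nonempty_G0_or_G1_embedding hclique
  · rintro (h | h) <;> obtain ⟨f⟩ := h
    exacts [(SimpleGraph.hasLadder_G0.map f).exists_infinite_chain,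
      (SimpleGraph.hasLadder_G1.map f).exists_infinite_chain]
end

section
/- If an incidence structure R = (E, ρ, F) admits a coding into an incidence structure R' = (E', ρ', F'), then the Galois lattice Gal(R) order-embeds into the Galois lattice Gal(R'). -/
set_option autoImplicit false

/-- The Galois lattice of an incidence structure `(E, ρ, F)`: all intersections
of sets `R⁻¹(y) = {x | ρ x y}` for `y ∈ F` (with `E` as the empty intersection),
ordered by inclusion. -/
def Gal {E F : Type*} (ρ : E → F → Prop) : Set (Set E) :=
  {X | ∃ S : Set F, X = {x | ∀ y ∈ S, ρ x y}}

/-- If an incidence structure has a coding into another, then its Galois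
lattice order-embeds into the Galois lattice of the other. -/
theorem gal_embeds_of_coding {E F E' F' : Type*}
    (ρ : E → F → Prop) (ρ' : E' → F' → Prop) (f : E → E') (g : F → F')
    (hcoding : ∀ x y, ρ x y ↔ ρ' (f x) (g y)) :
    Nonempty (↥(Gal ρ) ↪o ↥(Gal ρ')) := by
  refine ⟨OrderEmbedding.ofMapLEIff
    (fun X => ⟨{x' | ∀ y' ∈ {y' | ∀ x ∈ (X : Set E), ρ' (f x) y'}, ρ' x' y'},
      ⟨{y' | ∀ x ∈ (X : Set E), ρ' (f x) y'}, rfl⟩⟩) ?_⟩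
  intro X Y
  constructor
  · intro h x hx
    obtain ⟨S, hS⟩ := Y.2
    have hfx' : f x ∈ {x' | ∀ y' ∈ {y' | ∀ x ∈ (Y : Set E), ρ' (f x) y'}, ρ' x' y'} :=
      h (fun y' hy' => hy' x hx)
    show x ∈ (Y : Set E)
    rw [hS]
    intro y hyS
    refine (hcoding x y).mpr (hfx' (g y) ?_)
    intro x₁ hx₁
    rw [hS] at hx₁
    exact (hcoding x₁ y).mp (hx₁ y hyS)
  · intro h x' hx' y' hy'
    exact hx' y' (fun x hx => hy' x (h hx))
end

section
/- For every graph G, the neighborhood lattice N̂(G) is order-isomorphic to its own dual (opposite) ordered set. -/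
set_option autoImplicit false

namespace NhdAux

variable {V : Type*} (G : SimpleGraph V)

/-- The polar map. -/
def phi (X : Set V) : Set V := ⋂ x ∈ X, G.neighborSet x

lemma phi_mem (X : Set V) : phi G X ∈ nhdLattice G := ⟨X, rfl⟩

lemma mem_phi {X : Set V} {y : V} : y ∈ phi G X ↔ ∀ x ∈ X, G.Adj x y := by
  simp [phi, Set.mem_iInter, SimpleGraph.mem_neighborSet]

lemma phi_antitone {X Y : Set V} (h : X ⊆ Y) : phi G Y ⊆ phi G X := by
  intro z hz
  rw [mem_phi] at hz ⊢
  exact fun x hx => hz x (h hx)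

lemma subset_phi_phi (X : Set V) : X ⊆ phi G (phi G X) := by
  intro y hy
  rw [mem_phi]
  intro z hz
  rw [mem_phi] at hz
  exact (hz y hy).symm

lemma phi_phi_phi (X : Set V) : phi G (phi G (phi G X)) = phi G X :=
  Set.Subset.antisymm (phi_antitone G (subset_phi_phi G X)) (subset_phi_phi G (phi G X))

lemma phi_phi_of_mem {X : Set V} (hX : X ∈ nhdLattice G) : phi G (phi G X) = X := by
  obtain ⟨S, rfl⟩ := hX
  exact phi_phi_phi G S

end NhdAux

/-- The neighborhood lattice of a graph is isomorphic to its dual. -/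
theorem nhdLattice_self_dual {V : Type*} (G : SimpleGraph V) :
    Nonempty (↥(nhdLattice G) ≃o (↥(nhdLattice G))ᵒᵈ) := by
  refine ⟨{
    toFun := fun X => OrderDual.toDual ⟨NhdAux.phi G X.1, NhdAux.phi_mem G X.1⟩
    invFun := fun X => ⟨NhdAux.phi G (OrderDual.ofDual X).1,
      NhdAux.phi_mem G (OrderDual.ofDual X).1⟩
    left_inv := fun X => Subtype.ext (NhdAux.phi_phi_of_mem G X.2)
    right_inv := fun X => OrderDual.toDual.injective
      (Subtype.ext (NhdAux.phi_phi_of_mem G (OrderDual.ofDual X).2))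
    map_rel_iff' := by
      intro a b
      constructor
      · intro h
        calc (a : Set V) ⊆ NhdAux.phi G (NhdAux.phi G a.1) :=
              NhdAux.subset_phi_phi G a.1
          _ ⊆ NhdAux.phi G (NhdAux.phi G b.1) := NhdAux.phi_antitone G h
          _ = b.1 := NhdAux.phi_phi_of_mem G b.2
      · intro h
        exact NhdAux.phi_antitone G h }⟩
end

section
/- If a graph G contains an infinite clique or an induced subgraph isomorphic to G0, then the neighborhood lattice N̂(G) contains a subposet order-isomorphic to the power set of ℕ ordered by inclusion. If G contains an induced subgraph isomorphic to G1, then N̂(G) contains a chain of order type ω and a chain of order type ω*. -/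
set_option autoImplicit false

lemma mem_nhd {V : Type*} (G : SimpleGraph V) (b : ℕ → V) (S : Set ℕ) :
    (⋂ j ∈ S, G.neighborSet (b j)) ∈ nhdLattice G :=
  ⟨b '' S, (Set.biInter_image).symm⟩

lemma powerset_embed {V : Type*} (G : SimpleGraph V) (a b : ℕ → V)
    (h : ∀ i j, G.Adj (a i) (b j) ↔ i ≠ j) :
    Nonempty (Set ℕ ↪o ↥(nhdLattice G)) := by
  refine ⟨OrderEmbedding.ofMapLEIff
    (fun A => ⟨⋂ j ∈ Aᶜ, G.neighborSet (b j), mem_nhd G b Aᶜ⟩) ?_⟩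
  intro A B
  simp only [Subtype.mk_le_mk, Set.le_eq_subset]
  constructor
  · intro hsub n hn
    by_contra hnB
    have h1 : a n ∈ ⋂ j ∈ Aᶜ, G.neighborSet (b j) := by
      simp only [Set.mem_iInter, SimpleGraph.mem_neighborSet]
      intro j hj
      exact ((h n j).2 (fun e => hj (e ▸ hn))).symm
    have h2 := hsub h1
    simp only [Set.mem_iInter, SimpleGraph.mem_neighborSet] at h2
    exact (h n n).1 (h2 n hnB).symm rfl
  · intro hAB x hx
    simp only [Set.mem_iInter, SimpleGraph.mem_neighborSet] at hx ⊢
    intro j hj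
    exact hx j (fun hjA => hj (hAB hjA))

lemma omega_chain {V : Type*} (G : SimpleGraph V) (a b : ℕ → V)
    (h : ∀ i j, G.Adj (a i) (b j) ↔ i < j) :
    Nonempty (ℕ ↪o ↥(nhdLattice G)) := by
  refine ⟨OrderEmbedding.ofMapLEIff
    (fun n => ⟨⋂ j ∈ {j : ℕ | n ≤ j}, G.neighborSet (b j), mem_nhd G b _⟩) ?_⟩
  intro n m
  simp only [Subtype.mk_le_mk, Set.le_eq_subset]
  constructor
  · intro hsub
    by_contra hnm
    push_neg at hnm
    have h1 : a m ∈ ⋂ j ∈ {j : ℕ | n ≤ j}, G.neighborSet (b j) := by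
      simp only [Set.mem_iInter, SimpleGraph.mem_neighborSet, Set.mem_setOf_eq]
      intro j hj
      exact ((h m j).2 (lt_of_lt_of_le hnm hj)).symm
    have h2 := hsub h1
    simp only [Set.mem_iInter, SimpleGraph.mem_neighborSet, Set.mem_setOf_eq] at h2
    exact absurd ((h m m).1 (h2 m le_rfl).symm) (lt_irrefl m)
  · intro hnm x hx
    simp only [Set.mem_iInter, Set.mem_setOf_eq] at hx ⊢
    intro j hj
    exact hx j (hnm.trans hj)

lemma omega_star_chain {V : Type*} (G : SimpleGraph V) (a b : ℕ → V)
    (h : ∀ i j, G.Adj (a i) (b j) ↔ i < j) :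
    Nonempty (ℕᵒᵈ ↪o ↥(nhdLattice G)) := by
  refine ⟨OrderEmbedding.ofMapLEIff
    (fun n => ⟨⋂ i ∈ {i : ℕ | i ≤ OrderDual.ofDual n}, G.neighborSet (a i), mem_nhd G a _⟩) ?_⟩
  intro n m
  simp only [Subtype.mk_le_mk, Set.le_eq_subset]
  constructor
  · intro hsub
    change OrderDual.ofDual m ≤ OrderDual.ofDual n
    by_contra hnm
    push_neg at hnm
    set n' := OrderDual.ofDual n
    set m' := OrderDual.ofDual m
    have h1 : b m' ∈ ⋂ i ∈ {i : ℕ | i ≤ n'}, G.neighborSet (a i) := by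
      simp only [Set.mem_iInter, SimpleGraph.mem_neighborSet, Set.mem_setOf_eq]
      intro i hi
      exact (h i m').2 (lt_of_le_of_lt hi hnm)
    have h2 := hsub h1
    simp only [Set.mem_iInter, SimpleGraph.mem_neighborSet, Set.mem_setOf_eq] at h2
    exact absurd ((h m' m').1 (h2 m' le_rfl)) (lt_irrefl m')
  · intro hnm x hx
    have hmn : OrderDual.ofDual m ≤ OrderDual.ofDual n := hnm
    simp only [Set.mem_iInter, Set.mem_setOf_eq] at hx ⊢
    intro i hi
    exact hx i (hi.trans hmn)

/-- If `G` contains an infinite clique or an induced copy of `G0`, then its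
neighborhood lattice contains a subposet isomorphic to `𝒫(ℕ)`; if `G` contains
an induced copy of `G1`, then its neighborhood lattice contains a chain of type
`ω` and a chain of type `ω*`. -/
theorem nhdLattice_embeds_powerset_or_chains {V : Type*} (G : SimpleGraph V) :
    (((∃ S : Set V, S.Infinite ∧ G.IsClique S) ∨ Nonempty (G0 ↪g G)) →
      Nonempty (Set ℕ ↪o ↥(nhdLattice G))) ∧
    (Nonempty (G1 ↪g G) →
      Nonempty (ℕ ↪o ↥(nhdLattice G)) ∧ Nonempty (ℕᵒᵈ ↪o ↥(nhdLattice G))) := by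
  constructor
  · rintro (⟨S, hInf, hCl⟩ | he)
    all_goals try obtain ⟨e⟩ := he
    · obtain ⟨f⟩ : Nonempty (ℕ ↪ S) := ⟨hInf.natEmbedding S⟩
      refine powerset_embed G (fun n => (f n : V)) (fun n => (f n : V)) ?_
      intro i j
      constructor
      · intro hadj hij
        exact G.ne_of_adj hadj (by rw [hij])
      · intro hij
        exact hCl (f i).2 (f j).2 (fun hv => hij (f.injective (Subtype.ext hv)))
    · refine powerset_embed G (fun i => e (Sum.inl i)) (fun j => e (Sum.inr j)) ?_
      intro i j
      rw [e.map_adj_iff]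
      simp [G0, SimpleGraph.fromRel_adj]
  · rintro ⟨e⟩
    have h : ∀ i j, G.Adj (e (Sum.inl i)) (e (Sum.inr j)) ↔ i < j := by
      intro i j
      rw [e.map_adj_iff]
      simp only [G1, SimpleGraph.fromRel_adj]
      constructor
      · rintro ⟨-, (⟨i', j', hi, hj, hlt⟩ | ⟨i', j', hi, hj, hlt⟩)⟩
        · cases hi; cases hj; exact hlt
        · cases hi
      · intro hij
        exact ⟨by simp, Or.inl ⟨i, j, rfl, rfl, hij⟩⟩
    exact ⟨omega_chain G _ _ h, omega_star_chain G _ _ h⟩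
end

section
/- Let G be a point-determining graph. If X is a minimal element of N̂(G) \ {∅} (that is, X ∈ N̂(G), X ≠ ∅, and there is no Y ∈ N̂(G) with ∅ ⊊ Y ⊊ X), then X is a singleton. -/
set_option autoImplicit false

/-- A graph is point determining if distinct vertices have distinct neighborhoods. -/
def PointDetermining {V : Type*} (G : SimpleGraph V) : Prop :=
  ∀ x y : V, G.neighborSet x = G.neighborSet y → x = y

lemma key {V : Type*} (G : SimpleGraph V) (X : Set V) (S : Set V)
    (hXS : X = ⋂ x ∈ S, G.neighborSet x)
    (hmin : ¬ ∃ Y ∈ nhdLattice G, ∅ ⊂ Y ∧ Y ⊂ X)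
    (a b : V) (ha : a ∈ X) (hb : b ∈ X) (c : V)
    (hca : c ∈ G.neighborSet a) (hcb : c ∉ G.neighborSet b) : False := by
  apply hmin
  refine ⟨X ∩ G.neighborSet c, ⟨S ∪ {c}, ?_⟩, ?_, ?_⟩
  · rw [Set.biInter_union, Set.biInter_singleton, hXS]
  · exact Set.empty_ssubset.mpr ⟨a, ha, G.adj_symm hca⟩
  · refine ⟨Set.inter_subset_left, fun h => ?_⟩
    exact hcb (G.adj_symm (h hb).2)

/-- In a point-determining graph, every minimal nonempty element of the
neighborhood lattice is a singleton. -/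
theorem minimal_nhdLattice_singleton {V : Type*} (G : SimpleGraph V)
    (hpd : PointDetermining G) (X : Set V) (hX : X ∈ nhdLattice G) (hne : X ≠ ∅)
    (hmin : ¬ ∃ Y ∈ nhdLattice G, ∅ ⊂ Y ∧ Y ⊂ X) :
    ∃ x : V, X = {x} := by
  obtain ⟨S, hXS⟩ := hX
  obtain ⟨a, ha⟩ := Set.nonempty_iff_ne_empty.mpr hne
  refine ⟨a, Set.eq_singleton_iff_unique_mem.mpr ⟨ha, fun b hb => ?_⟩⟩
  by_contra hab
  have hN : G.neighborSet a ≠ G.neighborSet b := fun h => hab (hpd _ _ h.symm)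
  have : ∃ c, (c ∈ G.neighborSet a ∧ c ∉ G.neighborSet b) ∨
      (c ∈ G.neighborSet b ∧ c ∉ G.neighborSet a) := by
    by_contra hc
    push_neg at hc
    exact hN (Set.ext fun c => ⟨(hc c).1, (hc c).2⟩)
  rcases this with ⟨c, ⟨h1, h2⟩ | ⟨h1, h2⟩⟩
  · exact key G X S hXS hmin a b ha hb c h1 h2
  · exact key G X S hXS hmin b a hb ha c h1 h2
end

section
/- Let G be a point-determining graph and let X ∈ N̂(G) be such that the final segment ↑X = {X' ∈ N̂(G) : X ⊆ X'} is infinite, while ↑X' is finite for every X' ∈ N̂(G) strictly containing X. Then for every vertex x ∉ X, the set (X ∪ {x})⁺ = ⋂_{y ∈ X ∪ {x}} N_G(y) is finite. -/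
set_option autoImplicit false

/-- If `X` is in the neighborhood lattice, the final segment above `X` is
infinite, and the final segment above every element strictly containing `X`
is finite, then `(X ∪ {x})⁺` is finite for every vertex `x ∉ X`. -/
theorem plus_finite_of_maximal {V : Type*} (G : SimpleGraph V)
    (hpd : PointDetermining G) (X : Set V) (hX : X ∈ nhdLattice G)
    (hinf : {X' ∈ nhdLattice G | X ⊆ X'}.Infinite)
    (hfin : ∀ X' ∈ nhdLattice G, X ⊂ X' → {Y ∈ nhdLattice G | X' ⊆ Y}.Finite)
    (x : V) (hx : x ∉ X) :
    (⋂ y ∈ insert x X, G.neighborSet y).Finite := by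
  set Y := ⋂ y ∈ insert x X, G.neighborSet y with hYdef
  rcases Y.eq_empty_or_nonempty with hE | hne
  · rw [hE]; exact Set.finite_empty
  · set Z := ⋂ v ∈ Y, G.neighborSet v with hZdef
    have hZlat : Z ∈ nhdLattice G := ⟨Y, rfl⟩
    -- every y ∈ insert x X is in N(v) for every v ∈ Y
    have hmem : ∀ v ∈ Y, ∀ y ∈ insert x X, y ∈ G.neighborSet v := by
      intro v hv y hy
      have hv' : v ∈ G.neighborSet y := Set.mem_iInter₂.mp hv y hy
      exact G.adj_symm hv'
    have hXZ : X ⊂ Z := by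
      constructor
      · intro y hy
        exact Set.mem_iInter₂.mpr fun v hv => hmem v hv y (Set.mem_insert_of_mem _ hy)
      · intro hZX
        exact hx (hZX (Set.mem_iInter₂.mpr fun v hv => hmem v hv x (Set.mem_insert _ _)))
    have hfinF := hfin Z hZlat hXZ
    have himg : (fun v => G.neighborSet v) '' Y ⊆ {Y' ∈ nhdLattice G | Z ⊆ Y'} := by
      rintro _ ⟨v, hv, rfl⟩
      refine ⟨⟨{v}, by simp⟩, ?_⟩
      intro z hz
      exact Set.mem_iInter₂.mp hz v hv
    exact Set.Finite.of_finite_image (hfinF.subset himg)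
      (fun a _ b _ h => hpd a b h)
end

section
/- Let G be a point-determining graph. The following are equivalent: (1) for every nonempty X ∈ N̂(G), the final segment ↑X = {X' ∈ N̂(G) : X ⊆ X'} is finite; (2) every vertex of G has a finite neighborhood. -/
set_option autoImplicit false

/-- In a point-determining graph, all final segments of nonempty elements of
the neighborhood lattice are finite iff all neighborhoods are finite. -/
theorem finite_final_segments_iff_finite_neighborhoods {V : Type*}
    (G : SimpleGraph V) (hpd : PointDetermining G) :
    (∀ X ∈ nhdLattice G, X ≠ ∅ → {X' ∈ nhdLattice G | X ⊆ X'}.Finite) ↔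
      (∀ x : V, (G.neighborSet x).Finite) := by
  constructor
  · intro h x
    set X := ⋂ y ∈ G.neighborSet x, G.neighborSet y with hXdef
    have hXmem : X ∈ nhdLattice G := ⟨G.neighborSet x, rfl⟩
    have hxX : x ∈ X := Set.mem_iInter₂.2 fun y hy =>
      (G.mem_neighborSet y x).2 ((G.mem_neighborSet x y).1 hy).symm
    have hfin := h X hXmem (Set.nonempty_iff_ne_empty.1 ⟨x, hxX⟩)
    have himg : G.neighborSet '' (G.neighborSet x) ⊆ {X' ∈ nhdLattice G | X ⊆ X'} := by
      rintro _ ⟨y, hy, rfl⟩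
      refine ⟨⟨{y}, by simp⟩, ?_⟩
      exact Set.biInter_subset_of_mem hy
    exact Set.Finite.of_finite_image (hfin.subset himg)
      (Function.Injective.injOn fun a b hab => hpd a b hab)
  · intro h X hX hne
    obtain ⟨S, rfl⟩ := hX
    obtain ⟨v, hv⟩ := Set.nonempty_iff_ne_empty.2 hne
    have key : {X' ∈ nhdLattice G | (⋂ y ∈ S, G.neighborSet y) ⊆ X'} ⊆
        (fun T : Set V => ⋂ y ∈ T, G.neighborSet y) '' {T | T ⊆ G.neighborSet v} := by
      rintro X' ⟨⟨T, rfl⟩, hsub⟩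
      refine ⟨T, fun y hy => ?_, rfl⟩
      have hvT : v ∈ ⋂ y ∈ T, G.neighborSet y := hsub hv
      exact (G.mem_neighborSet v y).2 ((G.mem_neighborSet y v).1
        (Set.mem_iInter₂.1 hvT y hy)).symm
    exact (((h v).finite_subsets).image _).subset key
end

section
/- Let C = (E, ≤) be a linearly ordered set. The graphs G0(C), G1(C), G3(C), G4(C), G_c(C) and G_ab(C) are prime, provided |E| ≥ 3 in the case of G0(C) and |E| ≥ 2 in all the other cases. -/
set_option autoImplicit false

/-- The graph `G0(C)` on `E × {0,1}`: `(x,i)` and `(x',i')` adjacent iff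
`i ≠ i'` and `x ≠ x'`. -/
def G0C (E : Type*) [LinearOrder E] : SimpleGraph (E ⊕ E) :=
  SimpleGraph.fromRel (fun u v => ∃ x y : E, u = Sum.inl x ∧ v = Sum.inr y ∧ x ≠ y)

/-- The graph `G1(C)`: the only edges join `(x,0)` to `(y,1)` with `x ≤ y`. -/
def G1C (E : Type*) [LinearOrder E] : SimpleGraph (E ⊕ E) :=
  SimpleGraph.fromRel (fun u v => ∃ x y : E, u = Sum.inl x ∧ v = Sum.inr y ∧ x ≤ y)

/-- The graph `G3(C)`: the perfect matching `{(x,0),(x,1)}` together with an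
extra vertex `c` (here `none`) adjacent to every `(x,1)`. -/
def G3C (E : Type*) [LinearOrder E] : SimpleGraph (Option (E ⊕ E)) :=
  SimpleGraph.fromRel (fun u v =>
    (∃ x : E, u = some (Sum.inl x) ∧ v = some (Sum.inr x)) ∨
    (∃ x : E, u = none ∧ v = some (Sum.inr x)))

/-- The graph `G4(C)`: `(x,i)` and `(x',i')` adjacent iff `i = i' = 0` and
`x ≠ x'`, or `i ≠ i'` and `x = x'`. -/
def G4C (E : Type*) [LinearOrder E] : SimpleGraph (E ⊕ E) :=
  SimpleGraph.fromRel (fun u v =>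
    (∃ x y : E, u = Sum.inl x ∧ v = Sum.inl y ∧ x ≠ y) ∨
    (∃ x : E, u = Sum.inl x ∧ v = Sum.inr x))

/-- The graph `K(C)`: `G1(C)` together with all edges between distinct
vertices of `E × {0}`. -/
def KC (E : Type*) [LinearOrder E] : SimpleGraph (E ⊕ E) :=
  SimpleGraph.fromRel (fun u v =>
    (∃ x y : E, u = Sum.inl x ∧ v = Sum.inr y ∧ x ≤ y) ∨
    (∃ x y : E, u = Sum.inl x ∧ v = Sum.inl y ∧ x ≠ y))

/-- The graph `G_c(C)`: `K(C)` with a new vertex `c` (here `none`) adjacent to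
every element of `E × {1}`. -/
def GcC (E : Type*) [LinearOrder E] : SimpleGraph (Option (E ⊕ E)) :=
  SimpleGraph.fromRel (fun u v =>
    (∃ u' v' : E ⊕ E, u = some u' ∧ v = some v' ∧ (KC E).Adj u' v') ∨
    (∃ x : E, u = none ∧ v = some (Sum.inr x)))

/-- The graph `G_ab(C)`: `K(C)` with two new vertices `a` (here `Sum.inr true`)
and `b` (here `Sum.inr false`), with `a` adjacent to `b` and to every element
of `E × {0}`. -/
def GabC (E : Type*) [LinearOrder E] : SimpleGraph ((E ⊕ E) ⊕ Bool) :=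
  SimpleGraph.fromRel (fun u v =>
    (∃ u' v' : E ⊕ E, u = Sum.inl u' ∧ v = Sum.inl v' ∧ (KC E).Adj u' v') ∨
    (u = Sum.inr true ∧ v = Sum.inr false) ∨
    (∃ x : E, u = Sum.inr true ∧ v = Sum.inl (Sum.inl x)))

/-!
A vertex adjacent to one member of an autonomous set and not to another belongs to the set.
Starting from any two distinct vertices of an autonomous set, repeated use of this forces in a
key pair — `(x,0)` and `(x,1)`, or `c` and some `(x,1)`, or `a` and `b` — from which every other
vertex is reached in the same way. The copy of `K(C)` in `G_c(C)` and `G_ab(C)` is induced, and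
autonomous sets pull back along induced embeddings, so the step inside `K(C)` is shared.
-/

namespace Autonomous

variable {V W : Type*} {G : SimpleGraph V} {A : Set V}

theorem mem_of_adj_of_not_adj (hA : Autonomous G A) {u v w : V} (hu : u ∈ A) (hv : v ∈ A)
    (hwu : G.Adj w u) (hwv : ¬ G.Adj w v) : w ∈ A := by
  by_contra hw
  rcases hA w hw with h | h
  exacts [hwv (h v hv), h u hu hwu]

theorem comap {H : SimpleGraph W} (f : H ↪g G) (hA : Autonomous G A) :
    Autonomous H (f ⁻¹' A) := by
  intro v hv
  simpa only [Set.mem_preimage, f.map_adj_iff] using hA (f v) hv |>.imp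
    (fun h a ha => h (f a) ha) (fun h a ha => h (f a) ha)

end Autonomous

theorem PrimeGraph.of_autonomous_nontrivial {V : Type*} {G : SimpleGraph V}
    (hV : 3 < Cardinal.mk V)
    (h : ∀ A : Set V, Autonomous G A → A.Nontrivial → A = Set.univ) : PrimeGraph G := by
  refine ⟨hV, fun A hA => ?_⟩
  by_cases hA₂ : A.Nontrivial
  · exact .inr (.inr (h A hA hA₂))
  · exact (Set.not_nontrivial_iff.1 hA₂).eq_empty_or_singleton.elim .inl (.inr ∘ .inl)

theorem three_lt_mk_sum_self {E : Type*} (h : 2 ≤ Cardinal.mk E) : 3 < Cardinal.mk (E ⊕ E) := by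
  rw [Cardinal.mk_sum, Cardinal.lift_id]
  calc (3 : Cardinal) < 2 + 2 := by norm_num
    _ ≤ _ := add_le_add h h

section

variable {E : Type*} [LinearOrder E]

namespace G0C

@[simp] theorem not_adj_inl_inl (x y : E) : ¬ (G0C E).Adj (.inl x) (.inl y) := by simp [G0C]
@[simp] theorem not_adj_inr_inr (x y : E) : ¬ (G0C E).Adj (.inr x) (.inr y) := by simp [G0C]
@[simp] theorem adj_inl_inr (x y : E) : (G0C E).Adj (.inl x) (.inr y) ↔ x ≠ y := by simp [G0C]
@[simp] theorem adj_inr_inl (x y : E) : (G0C E).Adj (.inr x) (.inl y) ↔ y ≠ x := by simp [G0C]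

end G0C

namespace G1C

@[simp] theorem not_adj_inl_inl (x y : E) : ¬ (G1C E).Adj (.inl x) (.inl y) := by simp [G1C]
@[simp] theorem not_adj_inr_inr (x y : E) : ¬ (G1C E).Adj (.inr x) (.inr y) := by simp [G1C]
@[simp] theorem adj_inl_inr (x y : E) : (G1C E).Adj (.inl x) (.inr y) ↔ x ≤ y := by simp [G1C]
@[simp] theorem adj_inr_inl (x y : E) : (G1C E).Adj (.inr x) (.inl y) ↔ y ≤ x := by simp [G1C]

end G1C

namespace G3C

@[simp] theorem not_adj_none_inl (x : E) : ¬ (G3C E).Adj none (some (.inl x)) := by simp [G3C]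
@[simp] theorem not_adj_inl_none (x : E) : ¬ (G3C E).Adj (some (.inl x)) none := by simp [G3C]
@[simp] theorem adj_none_inr (x : E) : (G3C E).Adj none (some (.inr x)) := by simp [G3C]
@[simp] theorem adj_inr_none (x : E) : (G3C E).Adj (some (.inr x)) none := by simp [G3C]
@[simp] theorem not_adj_inr_inr (x y : E) : ¬ (G3C E).Adj (some (.inr x)) (some (.inr y)) := by
  simp [G3C]
@[simp] theorem adj_inl_inr (x y : E) : (G3C E).Adj (some (.inl x)) (some (.inr y)) ↔ x = y := by
  simp [G3C, eq_comm]
@[simp] theorem adj_inr_inl (x y : E) : (G3C E).Adj (some (.inr x)) (some (.inl y)) ↔ y = x := by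
  simp [G3C, eq_comm]

end G3C

namespace G4C

@[simp] theorem adj_inl_inl (x y : E) : (G4C E).Adj (.inl x) (.inl y) ↔ x ≠ y := by
  simp [G4C, eq_comm]
@[simp] theorem adj_inl_inr (x y : E) : (G4C E).Adj (.inl x) (.inr y) ↔ x = y := by
  simp [G4C, eq_comm]
@[simp] theorem adj_inr_inl (x y : E) : (G4C E).Adj (.inr x) (.inl y) ↔ y = x := by
  simp [G4C, eq_comm]
@[simp] theorem not_adj_inr_inr (x y : E) : ¬ (G4C E).Adj (.inr x) (.inr y) := by simp [G4C]

end G4C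

namespace KC

@[simp] theorem adj_inl_inl (x y : E) : (KC E).Adj (.inl x) (.inl y) ↔ x ≠ y := by
  simp [KC, eq_comm]
@[simp] theorem adj_inl_inr (x y : E) : (KC E).Adj (.inl x) (.inr y) ↔ x ≤ y := by simp [KC]
@[simp] theorem adj_inr_inl (x y : E) : (KC E).Adj (.inr x) (.inl y) ↔ y ≤ x := by simp [KC]
@[simp] theorem not_adj_inr_inr (x y : E) : ¬ (KC E).Adj (.inr x) (.inr y) := by simp [KC]

theorem exists_inl_mem_inr_mem {B : Set (E ⊕ E)} (hB : Autonomous (KC E) B)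
    (hB₂ : B.Nontrivial) : ∃ x y, .inl x ∈ B ∧ .inr y ∈ B := by
  obtain ⟨u | u, hu, v | v, hv, huv⟩ := hB₂
  · rcases (ne_of_apply_ne Sum.inl huv).lt_or_gt with h | h
    · exact ⟨u, u, hu, hB.mem_of_adj_of_not_adj hu hv (by simp) (by simp [h])⟩
    · exact ⟨v, v, hv, hB.mem_of_adj_of_not_adj hv hu (by simp) (by simp [h])⟩
  · exact ⟨u, v, hu, hv⟩
  · exact ⟨v, u, hv, hu⟩
  · rcases (ne_of_apply_ne Sum.inr huv).lt_or_gt with h | h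
    · exact ⟨v, u, hB.mem_of_adj_of_not_adj hv hu (by simp) (by simp [h]), hu⟩
    · exact ⟨u, v, hB.mem_of_adj_of_not_adj hu hv (by simp) (by simp [h]), hv⟩

end KC

namespace GcC

@[simp] theorem adj_some_some (u v : E ⊕ E) :
    (GcC E).Adj (some u) (some v) ↔ (KC E).Adj u v := by
  refine ⟨?_, fun h => ⟨by simpa using h.ne, .inl (.inl ⟨u, v, rfl, rfl, h⟩)⟩⟩
  rintro ⟨-, (⟨u', v', ⟨⟩, ⟨⟩, h⟩ | ⟨x, ⟨⟩, -⟩) | (⟨u', v', ⟨⟩, ⟨⟩, h⟩ | ⟨x, ⟨⟩, -⟩)⟩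
  exacts [h, h.symm]
@[simp] theorem adj_none_inr (x : E) : (GcC E).Adj none (some (.inr x)) := by simp [GcC]
@[simp] theorem adj_inr_none (x : E) : (GcC E).Adj (some (.inr x)) none := by simp [GcC]
@[simp] theorem not_adj_none_inl (x : E) : ¬ (GcC E).Adj none (some (.inl x)) := by simp [GcC]
@[simp] theorem not_adj_inl_none (x : E) : ¬ (GcC E).Adj (some (.inl x)) none := by simp [GcC]

end GcC

namespace GabC

@[simp] theorem adj_inl_inl (u v : E ⊕ E) :
    (GabC E).Adj (.inl u) (.inl v) ↔ (KC E).Adj u v := by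
  refine ⟨?_, fun h => ⟨by simpa using h.ne, .inl (.inl ⟨u, v, rfl, rfl, h⟩)⟩⟩
  rintro ⟨-, (⟨u', v', ⟨⟩, ⟨⟩, h⟩ | ⟨⟨⟩, -⟩ | ⟨x, ⟨⟩, -⟩) |
    (⟨u', v', ⟨⟩, ⟨⟩, h⟩ | ⟨⟨⟩, -⟩ | ⟨x, ⟨⟩, -⟩)⟩
  exacts [h, h.symm]
@[simp] theorem adj_true_false : (GabC E).Adj (.inr true) (.inr false) := by simp [GabC]
@[simp] theorem adj_false_true : (GabC E).Adj (.inr false) (.inr true) := by simp [GabC]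
@[simp] theorem adj_true_inl_inl (x : E) : (GabC E).Adj (.inr true) (.inl (.inl x)) := by
  simp [GabC]
@[simp] theorem adj_inl_inl_true (x : E) : (GabC E).Adj (.inl (.inl x)) (.inr true) := by
  simp [GabC]
@[simp] theorem not_adj_true_inl_inr (x : E) : ¬ (GabC E).Adj (.inr true) (.inl (.inr x)) := by
  simp [GabC]
@[simp] theorem not_adj_inl_inr_true (x : E) : ¬ (GabC E).Adj (.inl (.inr x)) (.inr true) := by
  simp [GabC]
@[simp] theorem not_adj_false_inl (u : E ⊕ E) : ¬ (GabC E).Adj (.inr false) (.inl u) := by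
  simp [GabC]
@[simp] theorem not_adj_inl_false (u : E ⊕ E) : ¬ (GabC E).Adj (.inl u) (.inr false) := by
  simp [GabC]

end GabC

namespace G0C

variable {A : Set (E ⊕ E)}

theorem eq_univ_of_inl_mem_of_inr_mem (hA : Autonomous (G0C E) A) {x : E}
    (hl : .inl x ∈ A) (hr : .inr x ∈ A) : A = Set.univ := by
  refine Set.eq_univ_of_forall (Sum.forall.2 ⟨fun z => ?_, fun z => ?_⟩)
  · rcases eq_or_ne z x with rfl | hz
    · exact hl
    · exact hA.mem_of_adj_of_not_adj hr hl (by simp [hz]) (by simp)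
  · rcases eq_or_ne z x with rfl | hz
    · exact hr
    · exact hA.mem_of_adj_of_not_adj hl hr (by simp [hz.symm]) (by simp)

theorem eq_univ_of_nontrivial (h3 : ∀ x y : E, ∃ z, z ≠ x ∧ z ≠ y)
    (hA : Autonomous (G0C E) A) (hA₂ : A.Nontrivial) : A = Set.univ := by
  have of_inl_inl {x y : E} (hxy : x ≠ y) (hx : .inl x ∈ A) (hy : .inl y ∈ A) :=
    eq_univ_of_inl_mem_of_inr_mem hA hx
      (hA.mem_of_adj_of_not_adj hy hx (by simp [hxy.symm]) (by simp))
  have of_inl_inr {x y : E} (hx : .inl x ∈ A) (hy : .inr y ∈ A) : A = Set.univ := by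
    obtain ⟨z, hzx, hzy⟩ := h3 x y
    exact of_inl_inl hzx.symm hx (hA.mem_of_adj_of_not_adj hy hx (by simp [hzy]) (by simp))
  obtain ⟨u | u, hu, v | v, hv, huv⟩ := hA₂
  · exact of_inl_inl (ne_of_apply_ne _ huv) hu hv
  · exact of_inl_inr hu hv
  · exact of_inl_inr hv hu
  · exact eq_univ_of_inl_mem_of_inr_mem hA
      (hA.mem_of_adj_of_not_adj hv hu (by simpa using huv) (by simp)) hu

end G0C

namespace G1C

variable {A : Set (E ⊕ E)}

theorem eq_univ_of_inl_mem_of_inr_mem (hA : Autonomous (G1C E) A) {x : E}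
    (hl : .inl x ∈ A) (hr : .inr x ∈ A) : A = Set.univ := by
  have inl_of_inr {z : E} (hz : .inr z ∈ A) : .inl z ∈ A :=
    hA.mem_of_adj_of_not_adj hz hl (by simp) (by simp)
  have inr_of_inl {z : E} (hz : .inl z ∈ A) : .inr z ∈ A :=
    hA.mem_of_adj_of_not_adj hz hr (by simp) (by simp)
  have inl_or_inr (z : E) : .inl z ∈ A ∨ .inr z ∈ A := (le_total z x).imp
    (fun h => hA.mem_of_adj_of_not_adj hr hl (by simp [h]) (by simp))
    (fun h => hA.mem_of_adj_of_not_adj hl hr (by simp [h]) (by simp))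
  exact Set.eq_univ_of_forall (Sum.forall.2
    ⟨fun z => (inl_or_inr z).elim id inl_of_inr, fun z => (inl_or_inr z).elim inr_of_inl id⟩)

theorem eq_univ_of_nontrivial (hA : Autonomous (G1C E) A) (hA₂ : A.Nontrivial) :
    A = Set.univ := by
  have of_inl_inr {x y : E} (hx : .inl x ∈ A) (hy : .inr y ∈ A) :=
    eq_univ_of_inl_mem_of_inr_mem hA (hA.mem_of_adj_of_not_adj hy hx (by simp) (by simp)) hy
  have of_inl_inl {x y : E} (hxy : x < y) (hx : .inl x ∈ A) (hy : .inl y ∈ A) :=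
    of_inl_inr hx (hA.mem_of_adj_of_not_adj (w := .inr x) hx hy (by simp) (by simp [hxy]))
  have of_inr_inr {x y : E} (hxy : x < y) (hx : .inr x ∈ A) (hy : .inr y ∈ A) :=
    of_inl_inr (hA.mem_of_adj_of_not_adj (w := .inl y) hy hx (by simp) (by simp [hxy])) hy
  obtain ⟨u | u, hu, v | v, hv, huv⟩ := hA₂
  · rcases (ne_of_apply_ne Sum.inl huv).lt_or_gt with h | h
    exacts [of_inl_inl h hu hv, of_inl_inl h hv hu]
  · exact of_inl_inr hu hv
  · exact of_inl_inr hv hu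
  · rcases (ne_of_apply_ne Sum.inr huv).lt_or_gt with h | h
    exacts [of_inr_inr h hu hv, of_inr_inr h hv hu]

end G1C

namespace G3C

variable {A : Set (Option (E ⊕ E))}

theorem eq_univ_of_none_mem_of_inr_mem (hA : Autonomous (G3C E) A) {x : E}
    (hn : none ∈ A) (hr : some (.inr x) ∈ A) : A = Set.univ := by
  have hr' (z : E) : some (.inr z) ∈ A := hA.mem_of_adj_of_not_adj hn hr (by simp) (by simp)
  refine Set.eq_univ_of_forall (Option.forall.2 ⟨hn, Sum.forall.2 ⟨fun z => ?_, hr'⟩⟩)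
  exact hA.mem_of_adj_of_not_adj (hr' z) hn (by simp) (by simp)

theorem eq_univ_of_nontrivial [Nontrivial E] (hA : Autonomous (G3C E) A) (hA₂ : A.Nontrivial) :
    A = Set.univ := by
  have of_inl_inr {x y : E} (hx : some (.inl x) ∈ A) (hy : some (.inr y) ∈ A) :=
    eq_univ_of_none_mem_of_inr_mem hA (hA.mem_of_adj_of_not_adj hy hx (by simp) (by simp)) hy
  have of_none_inl {x : E} (hn : none ∈ A) (hx : some (.inl x) ∈ A) : A = Set.univ := by
    obtain ⟨y, hyx⟩ := exists_ne x
    exact eq_univ_of_none_mem_of_inr_mem hA hn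
      (hA.mem_of_adj_of_not_adj (w := some (.inr y)) hn hx (by simp) (by simp [hyx.symm]))
  obtain ⟨_ | u | u, hu, _ | v | v, hv, huv⟩ := hA₂
  · exact absurd rfl huv
  · exact of_none_inl hu hv
  · exact eq_univ_of_none_mem_of_inr_mem hA hu hv
  · exact of_none_inl hv hu
  · exact of_inl_inr hu
      (hA.mem_of_adj_of_not_adj (w := some (.inr u)) hu hv (by simp) (by simpa using huv.symm))
  · exact of_inl_inr hu hv
  · exact eq_univ_of_none_mem_of_inr_mem hA hv hu
  · exact of_inl_inr hv hu
  · exact of_inl_inr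
      (hA.mem_of_adj_of_not_adj (w := some (.inl u)) hu hv (by simp) (by simpa using huv)) hu

end G3C

namespace G4C

variable {A : Set (E ⊕ E)}

theorem eq_univ_of_inl_mem_of_inr_mem [Nontrivial E] (hA : Autonomous (G4C E) A) {x : E}
    (hl : .inl x ∈ A) (hr : .inr x ∈ A) : A = Set.univ := by
  have hl' (z : E) : .inl z ∈ A := by
    rcases eq_or_ne z x with rfl | hz
    · exact hl
    · exact hA.mem_of_adj_of_not_adj hl hr (by simp [hz]) (by simp [hz])
  refine Set.eq_univ_of_forall (Sum.forall.2 ⟨hl', fun z => ?_⟩)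
  obtain ⟨w, hwz⟩ := exists_ne z
  exact hA.mem_of_adj_of_not_adj (hl' z) (hl' w) (by simp) (by simp [hwz])

theorem eq_univ_of_nontrivial [Nontrivial E] (hA : Autonomous (G4C E) A) (hA₂ : A.Nontrivial) :
    A = Set.univ := by
  have of_inl_inr {x y : E} (hx : .inl x ∈ A) (hy : .inr y ∈ A) :=
    eq_univ_of_inl_mem_of_inr_mem hA hx (hA.mem_of_adj_of_not_adj hx hy (by simp) (by simp))
  obtain ⟨u | u, hu, v | v, hv, huv⟩ := hA₂
  · exact eq_univ_of_inl_mem_of_inr_mem hA hu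
      (hA.mem_of_adj_of_not_adj hu hv (by simp) (by simpa using huv.symm))
  · exact of_inl_inr hu hv
  · exact of_inl_inr hv hu
  · exact of_inl_inr
      (hA.mem_of_adj_of_not_adj (w := .inl u) hu hv (by simp) (by simpa using huv)) hu

end G4C

namespace GcC

variable {A : Set (Option (E ⊕ E))}

theorem eq_univ_of_none_mem_of_inr_mem (hA : Autonomous (GcC E) A) {x : E}
    (hn : none ∈ A) (hr : some (.inr x) ∈ A) : A = Set.univ := by
  have hl : some (.inl x) ∈ A := hA.mem_of_adj_of_not_adj hr hn (by simp) (by simp)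
  refine Set.eq_univ_of_forall
    (Option.forall.2 ⟨hn, Sum.forall.2 ⟨fun z => ?_, fun z => ?_⟩⟩)
  · rcases eq_or_ne z x with rfl | hz
    · exact hl
    · exact hA.mem_of_adj_of_not_adj hl hn (by simp [hz]) (by simp)
  · exact hA.mem_of_adj_of_not_adj hn hr (by simp) (by simp)

theorem eq_univ_of_some_nontrivial (hA : Autonomous (GcC E) A)
    (hA₂ : (some ⁻¹' A).Nontrivial) : A = Set.univ := by
  obtain ⟨x, y, hx, hy⟩ := KC.exists_inl_mem_inr_mem (hA.comap ⟨.some, by simp⟩) hA₂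
  exact eq_univ_of_none_mem_of_inr_mem hA (hA.mem_of_adj_of_not_adj hy hx (by simp) (by simp)) hy

theorem eq_univ_of_nontrivial [Nontrivial E] (hA : Autonomous (GcC E) A) (hA₂ : A.Nontrivial) :
    A = Set.univ := by
  have of_none_some {w : E ⊕ E} (hn : none ∈ A) (hw : some w ∈ A) : A = Set.univ := by
    rcases w with x | x
    · obtain ⟨y, hyx⟩ := exists_ne x
      exact eq_univ_of_some_nontrivial hA ⟨.inl x, hw, .inl y,
        hA.mem_of_adj_of_not_adj hw hn (by simp [hyx]) (by simp), by simpa using hyx.symm⟩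
    · exact eq_univ_of_none_mem_of_inr_mem hA hn hw
  obtain ⟨_ | u, hu, _ | v, hv, huv⟩ := hA₂
  · exact absurd rfl huv
  · exact of_none_some hu hv
  · exact of_none_some hv hu
  · exact eq_univ_of_some_nontrivial hA ⟨u, hu, v, hv, ne_of_apply_ne _ huv⟩

end GcC

namespace GabC

variable {A : Set ((E ⊕ E) ⊕ Bool)}

theorem eq_univ_of_true_mem_of_false_mem (hA : Autonomous (GabC E) A)
    (ha : .inr true ∈ A) (hb : .inr false ∈ A) : A = Set.univ := by
  have hl (x : E) : .inl (.inl x) ∈ A := hA.mem_of_adj_of_not_adj ha hb (by simp) (by simp)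
  refine Set.eq_univ_of_forall
    (Sum.forall.2 ⟨Sum.forall.2 ⟨hl, fun x => ?_⟩, Bool.forall_bool.2 ⟨hb, ha⟩⟩)
  exact hA.mem_of_adj_of_not_adj (hl x) hb (by simp) (by simp)

theorem eq_univ_of_true_mem_of_inl_mem (hA : Autonomous (GabC E) A) {w : E ⊕ E}
    (ha : .inr true ∈ A) (hw : .inl w ∈ A) : A = Set.univ := by
  have of_inr {x : E} (hx : .inl (.inr x) ∈ A) : A = Set.univ :=
    eq_univ_of_true_mem_of_false_mem hA ha (hA.mem_of_adj_of_not_adj ha hx (by simp) (by simp))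
  rcases w with x | x
  · exact of_inr (hA.mem_of_adj_of_not_adj (w := .inl (.inr x)) hw ha (by simp) (by simp))
  · exact of_inr hw

theorem eq_univ_of_false_mem_of_inl_mem (hA : Autonomous (GabC E) A) {w : E ⊕ E}
    (hb : .inr false ∈ A) (hw : .inl w ∈ A) : A = Set.univ := by
  obtain ⟨x, hx⟩ : ∃ x : E, .inl (.inr x) ∈ A := by
    rcases w with x | x
    · exact ⟨x, hA.mem_of_adj_of_not_adj hw hb (by simp) (by simp)⟩
    · exact ⟨x, hw⟩
  exact eq_univ_of_true_mem_of_false_mem hA (hA.mem_of_adj_of_not_adj hb hx (by simp) (by simp)) hb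

theorem eq_univ_of_nontrivial (hA : Autonomous (GabC E) A) (hA₂ : A.Nontrivial) :
    A = Set.univ := by
  obtain ⟨u | (_ | _), hu, v | (_ | _), hv, huv⟩ := hA₂
  · obtain ⟨x, y, hx, hy⟩ := KC.exists_inl_mem_inr_mem (hA.comap ⟨.inl, by simp⟩)
      ⟨u, hu, v, hv, ne_of_apply_ne _ huv⟩
    exact eq_univ_of_true_mem_of_inl_mem hA
      (hA.mem_of_adj_of_not_adj hx hy (by simp) (by simp)) hx
  · exact eq_univ_of_false_mem_of_inl_mem hA hv hu
  · exact eq_univ_of_true_mem_of_inl_mem hA hv hu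
  · exact eq_univ_of_false_mem_of_inl_mem hA hu hv
  · exact absurd rfl huv
  · exact eq_univ_of_true_mem_of_false_mem hA hv hu
  · exact eq_univ_of_true_mem_of_inl_mem hA hu hv
  · exact eq_univ_of_true_mem_of_false_mem hA hu hv
  · exact absurd rfl huv

end GabC

theorem primeGraph_G0C (h : 3 ≤ Cardinal.mk E) : PrimeGraph (G0C E) :=
  .of_autonomous_nontrivial (three_lt_mk_sum_self (le_trans (by norm_num) h))
    fun _ => G0C.eq_univ_of_nontrivial (Cardinal.exists_ne_ne_of_three_le h)

theorem primeGraph_G1C (h : 2 ≤ Cardinal.mk E) : PrimeGraph (G1C E) :=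
  .of_autonomous_nontrivial (three_lt_mk_sum_self h) fun _ => G1C.eq_univ_of_nontrivial

theorem primeGraph_G3C (h : 2 ≤ Cardinal.mk E) : PrimeGraph (G3C E) :=
  have := Cardinal.one_lt_iff_nontrivial.1 (Cardinal.two_le_iff_one_lt.1 h)
  .of_autonomous_nontrivial
    ((three_lt_mk_sum_self h).trans_le (Cardinal.mk_le_of_injective (Option.some_injective _)))
    fun _ => G3C.eq_univ_of_nontrivial

theorem primeGraph_G4C (h : 2 ≤ Cardinal.mk E) : PrimeGraph (G4C E) :=
  have := Cardinal.one_lt_iff_nontrivial.1 (Cardinal.two_le_iff_one_lt.1 h)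
  .of_autonomous_nontrivial (three_lt_mk_sum_self h) fun _ => G4C.eq_univ_of_nontrivial

theorem primeGraph_GcC (h : 2 ≤ Cardinal.mk E) : PrimeGraph (GcC E) :=
  have := Cardinal.one_lt_iff_nontrivial.1 (Cardinal.two_le_iff_one_lt.1 h)
  .of_autonomous_nontrivial
    ((three_lt_mk_sum_self h).trans_le (Cardinal.mk_le_of_injective (Option.some_injective _)))
    fun _ => GcC.eq_univ_of_nontrivial

theorem primeGraph_GabC (h : 2 ≤ Cardinal.mk E) : PrimeGraph (GabC E) :=
  .of_autonomous_nontrivial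
    ((three_lt_mk_sum_self h).trans_le (Cardinal.mk_le_of_injective Sum.inl_injective))
    fun _ => GabC.eq_univ_of_nontrivial

end

/-- For a linearly ordered set `C := (E, ≤)`, the graphs `G0(C)`, `G1(C)`,
`G3(C)`, `G4(C)`, `G_c(C)` and `G_ab(C)` are prime, provided `|E| ≥ 3` for
`G0(C)` and `|E| ≥ 2` in all the other cases. -/
theorem CGraphs_prime (E : Type*) [LinearOrder E] :
    ((3 : Cardinal) ≤ Cardinal.mk E → PrimeGraph (G0C E)) ∧
    ((2 : Cardinal) ≤ Cardinal.mk E → PrimeGraph (G1C E)) ∧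
    ((2 : Cardinal) ≤ Cardinal.mk E → PrimeGraph (G3C E)) ∧
    ((2 : Cardinal) ≤ Cardinal.mk E → PrimeGraph (G4C E)) ∧
    ((2 : Cardinal) ≤ Cardinal.mk E → PrimeGraph (GcC E)) ∧
    ((2 : Cardinal) ≤ Cardinal.mk E → PrimeGraph (GabC E)) :=
  ⟨primeGraph_G0C, primeGraph_G1C, primeGraph_G3C, primeGraph_G4C, primeGraph_GcC,
    primeGraph_GabC⟩
end
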